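/- arXiv:2404.17306 — 3 statements merged into one kernel-verified Lean document; each statement's English description precedes it below -/
import Mathlib

section
/- Let G be a graph and S ⊆ V(G). Then the focused treedepth td(G,S) satisfies: td(G,S) = 0 if S = ∅; if V(G) ≠ ∅ then td(G,S) = max over components C of G of td(C, S ∩ V(C)); and if G is connected and S ≠ ∅ then td(G,S) = 1 + min over vertices u of G of td(G−u, S∖{u}). -/
open SimpleGraph

/-- A separation of a graph `G`: a pair `(A,B)` of subgraphs with `A ⊔ B = G`
and no edge in both `A` and `B`. -/
structure Separation {V : Type} (G : SimpleGraph V) where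
  A : G.Subgraph
  B : G.Subgraph
  union_eq : A ⊔ B = ⊤
  edge_disjoint : ∀ u v : V, A.Adj u v → B.Adj u v → False

namespace Separation

variable {V : Type} {G : SimpleGraph V}

/-- The order of a separation: `|V(A) ∩ V(B)|`. -/
noncomputable def order (s : Separation G) : ℕ := (s.A.verts ∩ s.B.verts).ncard

/-- The reversed separation `(B,A)`. -/
def flip (s : Separation G) : Separation G :=
  ⟨s.B, s.A, by rw [sup_comm]; exact s.union_eq,
    fun u v hb ha => s.edge_disjoint u v ha hb⟩

end Separation

/-- `𝒯` is a tangle of order `k` in `G`. -/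
def IsTangle {V : Type} (G : SimpleGraph V) (k : ℕ) (𝒯 : Set (Separation G)) : Prop :=
  (∀ s ∈ 𝒯, s.order < k) ∧
  (∀ s : Separation G, s.order ≤ k - 1 → s ∈ 𝒯 ∨ s.flip ∈ 𝒯) ∧
  (∀ s₁ ∈ 𝒯, ∀ s₂ ∈ 𝒯, ∀ s₃ ∈ 𝒯,
    s₁.A ⊔ s₂.A ⊔ s₃.A ≠ (⊤ : G.Subgraph)) ∧
  (∀ s ∈ 𝒯, s.A.verts ≠ Set.univ)

/-- `𝒯` is a tangle of `(G,S)` of order `k`: a tangle of `G` such that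
no member `(A,B)` has `S ⊆ V(A)`. -/
def IsTangleS {V : Type} (G : SimpleGraph V) (S : Set V) (k : ℕ)
    (𝒯 : Set (Separation G)) : Prop :=
  IsTangle G k 𝒯 ∧ ∀ s ∈ 𝒯, ¬ S ⊆ s.A.verts

/-- The tangle number of `(G,S)`: the maximum order of a tangle of `(G,S)`. -/
noncomputable def tangleNum {V : Type} (G : SimpleGraph V) (S : Set V) : ℕ :=
  sSup {k | ∃ 𝒯 : Set (Separation G), IsTangleS G S k 𝒯}

/-- `u` and `v` are joined by a walk avoiding `U`. -/
def ReachOutside {V : Type} (G : SimpleGraph V) (U : Set V) (u v : V) : Prop :=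
  ∃ p : G.Walk u v, ∀ x ∈ p.support, x ∉ U

/-- A tree decomposition of `(G,S)`: a tree decomposition of the induced subgraph of
`G` on the union of the bags, a set containing `S`, such that every component of `G`
minus the union of the bags has all its neighbors in `G` inside a single bag. -/
structure TreeDecompS {V ι : Type} (G : SimpleGraph V) (S : Set V) (T : SimpleGraph ι) where
  isTree : T.IsTree
  bag : ι → Set V
  S_subset : S ⊆ ⋃ x, bag x
  edge_in_bag : ∀ u v : V, u ∈ ⋃ x, bag x → v ∈ ⋃ x, bag x → G.Adj u v →
    ∃ x, u ∈ bag x ∧ v ∈ bag x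
  bags_connected : ∀ v ∈ ⋃ x, bag x, (T.induce {x | v ∈ bag x}).Connected
  comp_in_bag : ∀ v, v ∉ (⋃ x, bag x) → ∃ x, ∀ w y : V,
    ReachOutside G (⋃ x', bag x') v w → G.Adj w y → y ∈ ⋃ x', bag x' → y ∈ bag x

/-- `(G,S)` has a tree decomposition of width at most `n`. -/
def HasTreewidthSLE {V : Type} (G : SimpleGraph V) (S : Set V) (n : ℕ) : Prop :=
  ∃ (ι : Type) (T : SimpleGraph ι) (d : TreeDecompS G S T), ∀ x, (d.bag x).ncard ≤ n + 1

/-- The treewidth of `(G,S)`. -/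
noncomputable def twS {V : Type} (G : SimpleGraph V) (S : Set V) : ℕ :=
  sInf {n | HasTreewidthSLE G S n}

/-- A path decomposition of `(G,S)` with bags indexed by `Fin m`. -/
structure PathDecompS {V : Type} (G : SimpleGraph V) (S : Set V) (m : ℕ) where
  bag : Fin m → Set V
  S_subset : S ⊆ ⋃ i, bag i
  edge_in_bag : ∀ u v : V, u ∈ ⋃ i, bag i → v ∈ ⋃ i, bag i → G.Adj u v →
    ∃ i, u ∈ bag i ∧ v ∈ bag i
  interval : ∀ (v : V) (i j l : Fin m), i ≤ j → j ≤ l → v ∈ bag i → v ∈ bag l → v ∈ bag j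
  comp_in_bag : ∀ v, v ∉ (⋃ i, bag i) → ∃ i, ∀ w y : V,
    ReachOutside G (⋃ i', bag i') v w → G.Adj w y → y ∈ ⋃ i', bag i' → y ∈ bag i

/-- The pathwidth of `(G,S)`. -/
noncomputable def pwS {V : Type} (G : SimpleGraph V) (S : Set V) : ℕ :=
  sInf {n | ∃ (m : ℕ) (d : PathDecompS G S m), ∀ i, (d.bag i).ncard ≤ n + 1}

/-- An elimination forest of `(G,S)`, encoded by its (reflexive) ancestor relation `anc`
on the vertex set `W` of an induced subgraph of `G` containing `S`.  Edges of the induced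
subgraph join comparable vertices, and the neighborhood of every component of `G - W`
is a chain (equivalently, lies on a single root-to-leaf path). -/
structure ElimForestS {V : Type} (G : SimpleGraph V) (S : Set V) where
  W : Set V
  S_subset : S ⊆ W
  anc : V → V → Prop
  anc_dom : ∀ u v, anc u v → u ∈ W ∧ v ∈ W
  anc_refl : ∀ v ∈ W, anc v v
  anc_antisymm : ∀ u v, anc u v → anc v u → u = v
  anc_trans : ∀ u v w, anc u v → anc v w → anc u w
  ancestors_chain : ∀ u₁ u₂ v, anc u₁ v → anc u₂ v → anc u₁ u₂ ∨ anc u₂ u₁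
  edges_comparable : ∀ u v, u ∈ W → v ∈ W → G.Adj u v → anc u v ∨ anc v u
  comp_chain : ∀ v, v ∉ W → ∀ w₁ w₂ y₁ y₂ : V,
    ReachOutside G W v w₁ → ReachOutside G W v w₂ →
    G.Adj w₁ y₁ → G.Adj w₂ y₂ → y₁ ∈ W → y₂ ∈ W → anc y₁ y₂ ∨ anc y₂ y₁

/-- The vertex-height of an elimination forest is at most `h`:
every chain of the ancestor order has at most `h` elements. -/
def ElimForestS.HeightLE {V : Type} {G : SimpleGraph V} {S : Set V}
    (F : ElimForestS G S) (h : ℕ) : Prop :=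
  ∀ c : Finset V, (∀ x ∈ c, ∀ y ∈ c, F.anc x y ∨ F.anc y x) → c.card ≤ h

/-- The treedepth of `(G,S)`: minimum vertex-height of an elimination forest of `(G,S)`. -/
noncomputable def tdS {V : Type} (G : SimpleGraph V) (S : Set V) : ℕ :=
  sInf {h | ∃ F : ElimForestS G S, F.HeightLE h}

/-- `B` is a model of `H` in `G`: pairwise disjoint nonempty connected branch sets,
with an edge of `G` between the branch sets of any two adjacent vertices of `H`. -/
structure IsModelOn {V W : Type} (G : SimpleGraph V) (H : SimpleGraph W)
    (B : W → Set V) : Prop where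
  pairwise_disjoint : ∀ x y, x ≠ y → Disjoint (B x) (B y)
  nonempty : ∀ x, (B x).Nonempty
  connected : ∀ x, (G.induce (B x)).Connected
  adj : ∀ x y, H.Adj x y → ∃ u ∈ B x, ∃ v ∈ B y, G.Adj u v

/-- `G` contains no model of `H`, i.e. `G` is `H`-minor-free. -/
def MinorFree {V W : Type} (G : SimpleGraph V) (H : SimpleGraph W) : Prop :=
  ¬ ∃ B : W → Set V, IsModelOn G H B

/-- A family of `n` pairwise vertex-disjoint `X`–`Y` paths in `G`. -/
structure DisjointXYPaths {V : Type} (G : SimpleGraph V) (X Y : Set V) (n : ℕ) where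
  a : Fin n → V
  b : Fin n → V
  p : ∀ i, G.Walk (a i) (b i)
  isPath : ∀ i, (p i).IsPath
  mem_X : ∀ i, a i ∈ X
  mem_Y : ∀ i, b i ∈ Y
  internal : ∀ i, ∀ v ∈ (p i).support, v ≠ a i → v ≠ b i → v ∉ X ∪ Y
  disjoint : ∀ i j, i ≠ j → ∀ v, v ∈ (p i).support → v ∉ (p j).support

/-- The graph obtained from `H` by adding a universal vertex. -/
def addUniversal {W : Type} (H : SimpleGraph W) : SimpleGraph (W ⊕ Unit) :=
  SimpleGraph.fromRel (fun a b =>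
    (∃ x y, a = Sum.inl x ∧ b = Sum.inl y ∧ H.Adj x y) ∨ (∃ x, a = Sum.inl x ∧ b = Sum.inr ()))

/-- The fan on `ℓ + 1` vertices: the path on `ℓ` vertices plus a universal vertex. -/
def fanGraph (ℓ : ℕ) : SimpleGraph (Fin ℓ ⊕ Unit) := addUniversal (SimpleGraph.pathGraph ℓ)

/-- `X` is a fan: it becomes a path after removal of at most one vertex. -/
def IsFan {W : Type} (X : SimpleGraph W) : Prop :=
  (∃ n : ℕ, Nonempty (X ≃g SimpleGraph.pathGraph n)) ∨
  (∃ x₀ : W, ∃ n : ℕ, Nonempty (X.induce {v | v ≠ x₀} ≃g SimpleGraph.pathGraph n))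

/-- `X` is an apex-forest: it becomes a forest after removal of at most one vertex. -/
def IsApexForest {W : Type} (X : SimpleGraph W) : Prop :=
  X.IsAcyclic ∨ ∃ x₀ : W, (X.induce {v | v ≠ x₀}).IsAcyclic

/-- `f` assigns layers to the vertices of `G`: every edge joins vertices in the same
or in consecutive layers. -/
def IsLayering {V : Type} (G : SimpleGraph V) (f : V → ℕ) : Prop :=
  ∀ u v, G.Adj u v → f u ≤ f v + 1 ∧ f v ≤ f u + 1

/-- `G` has layered pathwidth at most `c`. -/
def LayeredPathwidthLE {V : Type} (G : SimpleGraph V) (c : ℕ) : Prop :=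
  ∃ (m : ℕ) (d : PathDecompS G Set.univ m) (f : V → ℕ),
    IsLayering G f ∧ ∀ (i : Fin m) (j : ℕ), (d.bag i ∩ f ⁻¹' {j}).ncard ≤ c

/-- `G` has layered treedepth at most `c`: there are an elimination forest of `G` and a
layering such that every root-to-leaf path meets every layer in at most `c` vertices. -/
def LayeredTreedepthLE {V : Type} (G : SimpleGraph V) (c : ℕ) : Prop :=
  ∃ (F : ElimForestS G Set.univ) (f : V → ℕ),
    IsLayering G f ∧ ∀ (v : V) (j : ℕ), ({u | F.anc u v} ∩ f ⁻¹' {j}).ncard ≤ c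

section AuxTD

variable {V : Type}

private lemma reachable_of_mem_support {G : SimpleGraph V} :
    ∀ {u v : V} (p : G.Walk u v), ∀ x ∈ p.support, G.Reachable u x := by
  intro u v p
  induction p with
  | nil =>
    intro x hx
    rw [SimpleGraph.Walk.support_nil, List.mem_singleton] at hx
    subst hx; exact Reachable.refl _
  | cons h q ih =>
    intro x hx
    rw [SimpleGraph.Walk.support_cons, List.mem_cons] at hx
    rcases hx with rfl | hx
    · exact Reachable.refl _
    · exact h.reachable.trans (ih x hx)

private lemma walk_toInduce {G : SimpleGraph V} {s : Set V} :
    ∀ {u v : V} (p : G.Walk u v) (hs : ∀ x ∈ p.support, x ∈ s),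
      ∃ q : (G.induce s).Walk ⟨u, hs u p.start_mem_support⟩ ⟨v, hs v p.end_mem_support⟩,
        ∀ x ∈ q.support, (x : V) ∈ p.support := by
  intro u v p
  induction p with
  | nil =>
    intro hs
    exact ⟨SimpleGraph.Walk.nil, by simp⟩
  | @cons a b c h q ih =>
    intro hs
    have hs' : ∀ x ∈ q.support, x ∈ s := fun x hx => hs x (by simp [hx])
    obtain ⟨q', hq'⟩ := ih hs'
    have hadj : (G.induce s).Adj ⟨a, hs a (by simp)⟩ ⟨b, hs' b q.start_mem_support⟩ := h
    refine ⟨SimpleGraph.Walk.cons hadj q', ?_⟩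
    intro x hx
    rw [SimpleGraph.Walk.support_cons, List.mem_cons] at hx
    rcases hx with rfl | hx
    · simp
    · simp [hq' x hx]

private lemma walk_ofInduce {G : SimpleGraph V} {s : Set V} {u v : ↥s}
    (p : (G.induce s).Walk u v) :
    ∃ q : G.Walk u v, ∀ x ∈ q.support, ∃ y : ↥s, y ∈ p.support ∧ (y : V) = x := by
  refine ⟨p.map (SimpleGraph.Embedding.induce s).toHom, ?_⟩
  intro x hx
  have hx' : x ∈ (p.map (SimpleGraph.Embedding.induce s).toHom).support := hx
  rw [SimpleGraph.Walk.support_map, List.mem_map] at hx'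
  obtain ⟨y, hy, rfl⟩ := hx'
  exact ⟨y, hy, rfl⟩

/-- The set of possible heights is nonempty. -/
private lemma exists_elimForest [Fintype V] (G : SimpleGraph V) (S : Set V) :
    ∃ F : ElimForestS G S, F.HeightLE (Fintype.card V) := by
  classical
  let e := Fintype.equivFin V
  refine ⟨⟨Set.univ, by simp, fun u v => e u ≤ e v, fun u v _ => ⟨trivial, trivial⟩,
      fun v _ => le_refl _, fun u v h1 h2 => e.injective (le_antisymm h1 h2),
      fun u v w h1 h2 => le_trans h1 h2, fun u₁ u₂ v _ _ => le_total _ _,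
      fun u v _ _ _ => le_total _ _, fun v hv => absurd trivial hv⟩, ?_⟩
  intro c _
  simpa using Finset.card_le_univ c

private lemma tdS_le [Fintype V] {G : SimpleGraph V} {S : Set V} {h : ℕ}
    (hF : ∃ F : ElimForestS G S, F.HeightLE h) : tdS G S ≤ h :=
  Nat.sInf_le hF

private lemma exists_elimForest_tdS [Fintype V] (G : SimpleGraph V) (S : Set V) :
    ∃ F : ElimForestS G S, F.HeightLE (tdS G S) := by
  have : tdS G S ∈ {h | ∃ F : ElimForestS G S, F.HeightLE h} :=
    Nat.sInf_mem ⟨Fintype.card V, exists_elimForest G S⟩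
  exact this

/-- Restriction of an elimination forest to an induced subgraph. -/
private def ElimForestS.restrict {G : SimpleGraph V} {S : Set V} (F : ElimForestS G S)
    (s : Set V) : ElimForestS (G.induce s) (Subtype.val ⁻¹' S) where
  W := {x : ↥s | (x : V) ∈ F.W}
  S_subset := fun x hx => F.S_subset hx
  anc := fun x y => F.anc x y
  anc_dom := fun u v h => F.anc_dom u v h
  anc_refl := fun v hv => F.anc_refl v hv
  anc_antisymm := fun u v h1 h2 => Subtype.ext (F.anc_antisymm u v h1 h2)
  anc_trans := fun u v w h1 h2 => F.anc_trans u v w h1 h2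
  ancestors_chain := fun u₁ u₂ v h1 h2 => F.ancestors_chain u₁ u₂ v h1 h2
  edges_comparable := fun u v hu hv hadj => F.edges_comparable u v hu hv hadj
  comp_chain := by
    intro v hv w₁ w₂ y₁ y₂ hr1 hr2 ha1 ha2 hy1 hy2
    obtain ⟨p₁, hp₁⟩ := hr1
    obtain ⟨p₂, hp₂⟩ := hr2
    obtain ⟨q₁, hq₁⟩ := walk_ofInduce p₁
    obtain ⟨q₂, hq₂⟩ := walk_ofInduce p₂
    refine F.comp_chain v hv w₁ w₂ y₁ y₂ ⟨q₁, ?_⟩ ⟨q₂, ?_⟩ ha1 ha2 hy1 hy2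
    · intro x hx hxW
      obtain ⟨y, hy, rfl⟩ := hq₁ x hx
      exact hp₁ y hy hxW
    · intro x hx hxW
      obtain ⟨y, hy, rfl⟩ := hq₂ x hx
      exact hp₂ y hy hxW

private lemma ElimForestS.restrict_heightLE {G : SimpleGraph V} {S : Set V}
    (F : ElimForestS G S) (s : Set V) {h : ℕ} (hF : F.HeightLE h) :
    (F.restrict s).HeightLE h := by
  intro c hc
  classical
  rw [← Finset.card_image_of_injective c Subtype.val_injective]
  apply hF
  intro x hx y hy
  rw [Finset.mem_image] at hx hy
  obtain ⟨x', hx', rfl⟩ := hx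
  obtain ⟨y', hy', rfl⟩ := hy
  exact hc x' hx' y' hy'

/-- Restriction after deleting a universal root drops the height by one. -/
private lemma ElimForestS.restrict_root_heightLE {G : SimpleGraph V} {S : Set V}
    (F : ElimForestS G S) {r : V} (hr : ∀ v ∈ F.W, F.anc r v) (hrW : r ∈ F.W) {h : ℕ}
    (hF : F.HeightLE h) : (F.restrict {v | v ≠ r}).HeightLE (h - 1) := by
  intro c hc
  classical
  have hmem : ∀ x : ↥{v | v ≠ r}, x ∈ c → (x : V) ∈ F.W := by
    intro x hx
    rcases hc x hx x hx with h1 | h1 <;> exact (F.anc_dom _ _ h1).1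
  have hchain : ((insert r (c.image Subtype.val)) : Finset V).card ≤ h := by
    apply hF
    intro x hx y hy
    rw [Finset.mem_insert] at hx hy
    have key : ∀ z ∈ c.image (Subtype.val : ↥{v | v ≠ r} → V), F.anc r z := by
      intro z hz
      rw [Finset.mem_image] at hz
      obtain ⟨z', hz', rfl⟩ := hz
      exact hr _ (hmem z' hz')
    rcases hx with rfl | hx
    · rcases hy with rfl | hy
      · exact Or.inl (F.anc_refl _ hrW)
      · exact Or.inl (key y hy)
    · rcases hy with rfl | hy
      · exact Or.inr (key x hx)
      · rw [Finset.mem_image] at hx hy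
        obtain ⟨x', hx', rfl⟩ := hx
        obtain ⟨y', hy', rfl⟩ := hy
        exact hc x' hx' y' hy'
  have hnot : r ∉ c.image Subtype.val := by
    rw [Finset.mem_image]
    rintro ⟨x', _, hx'⟩
    exact x'.prop hx'
  rw [Finset.card_insert_of_notMem hnot, Finset.card_image_of_injective c Subtype.val_injective]
    at hchain
  omega

private lemma exists_root [Fintype V] {G : SimpleGraph V} {S : Set V} (F : ElimForestS G S)
    (hG : G.Connected) (hW : F.W.Nonempty) :
    ∃ r ∈ F.W, ∀ v ∈ F.W, F.anc r v := by
  classical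
  -- minimum of a finite chain
  have hbot : ∀ t : Finset V, t.Nonempty → (∀ x ∈ t, ∀ y ∈ t, F.anc x y ∨ F.anc y x) →
      ∃ m ∈ t, ∀ x ∈ t, F.anc m x := by
    intro t
    induction t using Finset.induction_on with
    | empty => rintro ⟨x, hx⟩ _; simp at hx
    | @insert a t' ha ih =>
      intro _ hc
      have hca : F.anc a a := by
        rcases hc a (Finset.mem_insert_self a t') a (Finset.mem_insert_self a t') with h | h <;>
          exact h
      rcases t'.eq_empty_or_nonempty with rfl | hne
      · refine ⟨a, Finset.mem_insert_self a _, ?_⟩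
        intro x hx
        rw [Finset.mem_insert] at hx
        rcases hx with rfl | hx
        · exact hca
        · simp at hx
      · obtain ⟨m, hm, hmin⟩ := ih hne (fun x hx y hy =>
          hc x (Finset.mem_insert_of_mem hx) y (Finset.mem_insert_of_mem hy))
        rcases hc a (Finset.mem_insert_self a t') m (Finset.mem_insert_of_mem hm) with h | h
        · refine ⟨a, Finset.mem_insert_self a _, ?_⟩
          intro x hx
          rw [Finset.mem_insert] at hx
          rcases hx with rfl | hx
          · exact hca
          · exact F.anc_trans _ _ _ h (hmin x hx)
        · refine ⟨m, Finset.mem_insert_of_mem hm, ?_⟩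
          intro x hx
          rw [Finset.mem_insert] at hx
          rcases hx with rfl | hx
          · exact h
          · exact hmin x hx
  -- the root of each vertex of W
  have hroot0 : ∀ v, ∃ m, v ∈ F.W → F.anc m v ∧ ∀ u, F.anc u v → F.anc m u := by
    intro v
    by_cases hv : v ∈ F.W
    · have hne : (Finset.univ.filter (fun u => F.anc u v)).Nonempty :=
        ⟨v, by simp [F.anc_refl v hv]⟩
      obtain ⟨m, hm, hmin⟩ := hbot _ hne (by
        intro x hx y hy
        rw [Finset.mem_filter] at hx hy
        exact F.ancestors_chain x y v hx.2 hy.2)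
      rw [Finset.mem_filter] at hm
      exact ⟨m, fun _ => ⟨hm.2, fun u hu => hmin u (by simp [hu])⟩⟩
    · exact ⟨v, fun h => absurd h hv⟩
  choose root hroot using hroot0
  -- comparable vertices have the same root
  have hre0 : ∀ y₁ y₂, F.anc y₁ y₂ → root y₁ = root y₂ := by
    intro y₁ y₂ h12
    have hy₁ := (F.anc_dom _ _ h12).1
    have hy₂ := (F.anc_dom _ _ h12).2
    obtain ⟨hr1, hmin1⟩ := hroot y₁ hy₁
    obtain ⟨hr2, hmin2⟩ := hroot y₂ hy₂
    have h1 : F.anc (root y₂) (root y₁) := hmin2 _ (F.anc_trans _ _ _ hr1 h12)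
    rcases F.ancestors_chain (root y₂) y₁ y₂ hr2 h12 with h | h
    · exact F.anc_antisymm _ _ (hmin1 _ h) h1
    · exact F.anc_antisymm _ _ (F.anc_trans _ _ _ hr1 h) h1
  have hre : ∀ y₁ y₂, (F.anc y₁ y₂ ∨ F.anc y₂ y₁) → root y₁ = root y₂ := by
    rintro y₁ y₂ (h | h)
    · exact hre0 _ _ h
    · exact (hre0 _ _ h).symm
  -- attachment of vertices outside W
  have hattach : ∀ {v t : V}, G.Walk v t → v ∉ F.W → t ∈ F.W →
      ∃ w y, ReachOutside G F.W v w ∧ G.Adj w y ∧ y ∈ F.W := by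
    intro v t p
    induction p with
    | nil => intro hv ht; exact absurd ht hv
    | @cons a b c h q ih =>
      intro hv ht
      by_cases hb : b ∈ F.W
      · exact ⟨a, b, ⟨SimpleGraph.Walk.nil, by simp [hv]⟩, h, hb⟩
      · obtain ⟨w, y, ⟨p', hp'⟩, hadj, hy⟩ := ih hb ht
        refine ⟨w, y, ⟨SimpleGraph.Walk.cons h p', ?_⟩, hadj, hy⟩
        intro x hx
        rw [SimpleGraph.Walk.support_cons, List.mem_cons] at hx
        rcases hx with rfl | hx
        · exact hv
        · exact hp' x hx
  -- the relation attaching a W-vertex to every vertex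
  set Rel : V → V → Prop := fun v y =>
    (v ∈ F.W ∧ y = v) ∨
    (v ∉ F.W ∧ ∃ w, ReachOutside G F.W v w ∧ G.Adj w y ∧ y ∈ F.W) with hRel
  have hRelW : ∀ v y, Rel v y → y ∈ F.W := by
    rintro v y (⟨hv, rfl⟩ | ⟨_, w, _, _, hy⟩)
    · exact hv
    · exact hy
  have hRelWalk : ∀ v y, Rel v y → Nonempty (G.Walk v y) := by
    rintro v y (⟨hv, rfl⟩ | ⟨_, w, ⟨p, _⟩, hadj, _⟩)
    · exact ⟨SimpleGraph.Walk.nil⟩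
    · exact ⟨p.append (SimpleGraph.Walk.cons hadj SimpleGraph.Walk.nil)⟩
  -- the edge step
  have hedge : ∀ a b ya yb, G.Adj a b → Rel a ya → Rel b yb → root ya = root yb := by
    intro a b ya yb hab hRa hRb
    rcases hRa with ⟨haW, hya⟩ | ⟨haW, w1, hr1, ad1, hy1⟩ <;>
      rcases hRb with ⟨hbW, hyb⟩ | ⟨hbW, w2, hr2, ad2, hy2⟩
    · subst hya; subst hyb; exact hre _ _ (F.edges_comparable _ _ haW hbW hab)
    · rw [hya]
      exact hre _ _ (F.comp_chain b hbW b w2 a yb ⟨SimpleGraph.Walk.nil, by simp [hbW]⟩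
        hr2 hab.symm ad2 haW hy2)
    · rw [hyb]
      exact hre _ _ (F.comp_chain a haW w1 a ya b hr1 ⟨SimpleGraph.Walk.nil, by simp [haW]⟩
        ad1 hab hy1 hbW)
    · obtain ⟨p1, hp1⟩ := hr1
      have hreach : ReachOutside G F.W b w1 := by
        refine ⟨SimpleGraph.Walk.cons hab.symm p1, ?_⟩
        intro x hx
        rw [SimpleGraph.Walk.support_cons, List.mem_cons] at hx
        rcases hx with rfl | hx
        · exact hbW
        · exact hp1 x hx
      exact hre _ _ (F.comp_chain b hbW w1 w2 ya yb hreach hr2 ad1 ad2 hy1 hy2)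
  -- walk induction: roots of attachments along a walk agree
  have hkey : ∀ {a b : V} (p : G.Walk a b) (ya yb : V), Rel a ya → Rel b yb →
      root ya = root yb := by
    intro a b p
    induction p with
    | nil =>
      intro ya yb hRa hRb
      rcases hRa with ⟨haW, hya⟩ | ⟨haW, w1, hr1, ad1, hy1⟩ <;>
        rcases hRb with ⟨hbW, hyb⟩ | ⟨hbW, w2, hr2, ad2, hy2⟩
      · subst hya; subst hyb; rfl
      · exact absurd haW hbW
      · exact absurd hbW haW
      · exact hre _ _ (F.comp_chain _ haW w1 w2 ya yb hr1 hr2 ad1 ad2 hy1 hy2)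
    | @cons a b c h q ih =>
      intro ya yc hRa hRc
      have hRb : ∃ y, Rel b y := by
        by_cases hb : b ∈ F.W
        · exact ⟨b, Or.inl ⟨hb, rfl⟩⟩
        · obtain ⟨p'⟩ := hRelWalk c yc hRc
          obtain ⟨w, y, hrw, hadj, hy⟩ := hattach (q.append p') hb (hRelW c yc hRc)
          exact ⟨y, Or.inr ⟨hb, w, hrw, hadj, hy⟩⟩
      obtain ⟨yb, hRb⟩ := hRb
      exact (hedge a b ya yb h hRa hRb).trans (ih yb yc hRb hRc)
  obtain ⟨s₀, hs₀⟩ := hW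
  refine ⟨root s₀, (F.anc_dom _ _ (hroot s₀ hs₀).1).1, ?_⟩
  intro v hv
  have := hkey ((hG.preconnected v s₀).some) v s₀ (Or.inl ⟨hv, rfl⟩) (Or.inl ⟨hs₀, rfl⟩)
  rw [← this]
  exact (hroot v hv).1

private lemma tdS_combine [Fintype V] (G : SimpleGraph V) (S : Set V) {h : ℕ}
    (hc : ∀ C : G.ConnectedComponent, tdS (G.induce C.supp) (Subtype.val ⁻¹' S) ≤ h) :
    tdS G S ≤ h := by
  classical
  have hFC : ∀ C : G.ConnectedComponent,
      ∃ F : ElimForestS (G.induce C.supp) (Subtype.val ⁻¹' S), F.HeightLE h := by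
    intro C
    obtain ⟨F, hF⟩ := exists_elimForest_tdS (G.induce C.supp) (Subtype.val ⁻¹' S)
    exact ⟨F, fun c hcc => le_trans (hF c hcc) (hc C)⟩
  choose FC hFCh using hFC
  set W : Set V := {v | ∃ (C : G.ConnectedComponent) (hv : v ∈ C.supp),
    (⟨v, hv⟩ : C.supp) ∈ (FC C).W} with hWdef
  set anc : V → V → Prop := fun u v => ∃ (C : G.ConnectedComponent) (hu : u ∈ C.supp)
    (hv : v ∈ C.supp), (FC C).anc ⟨u, hu⟩ ⟨v, hv⟩ with hancdef
  have hancW : ∀ u v, anc u v → u ∈ W ∧ v ∈ W := by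
    rintro u v ⟨C, hu, hv, ha⟩
    obtain ⟨h1, h2⟩ := (FC C).anc_dom _ _ ha
    exact ⟨⟨C, hu, h1⟩, ⟨C, hv, h2⟩⟩
  refine tdS_le ⟨⟨W, ?_, anc, hancW, ?_, ?_, ?_, ?_, ?_, ?_⟩, ?_⟩
  · -- S_subset
    intro v hv
    exact ⟨G.connectedComponentMk v, rfl, (FC _).S_subset hv⟩
  · -- refl
    rintro v ⟨C, hv, hm⟩
    exact ⟨C, hv, hv, (FC C).anc_refl _ hm⟩
  · -- antisymm
    rintro u v ⟨C, hu, hv, h1⟩ ⟨C', hv', hu', h2⟩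
    have hCC : C = C' := hu.symm.trans hu'
    subst hCC
    have := (FC C).anc_antisymm ⟨u, hu⟩ ⟨v, hv⟩ h1 h2
    exact congrArg Subtype.val this
  · -- trans
    rintro u v w ⟨C, hu, hv, h1⟩ ⟨C', hv', hw', h2⟩
    have hCC : C = C' := hv.symm.trans hv'
    subst hCC
    exact ⟨C, hu, hw', (FC C).anc_trans _ _ _ h1 h2⟩
  · -- ancestors chain
    rintro u₁ u₂ v ⟨C, hu1, hv, h1⟩ ⟨C', hu2, hv', h2⟩
    have hCC : C = C' := hv.symm.trans hv'
    subst hCC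
    rcases (FC C).ancestors_chain ⟨u₁, hu1⟩ ⟨u₂, hu2⟩ ⟨v, hv⟩ h1 h2 with h | h
    · exact Or.inl ⟨C, hu1, hu2, h⟩
    · exact Or.inr ⟨C, hu2, hu1, h⟩
  · -- edges comparable
    rintro u v ⟨C, hu, hmu⟩ ⟨C', hv, hmv⟩ hadj
    have hCC : C = C' := by
      rw [← hu, ← hv]
      exact SimpleGraph.ConnectedComponent.connectedComponentMk_eq_of_adj hadj
    subst hCC
    have hadj' : (G.induce C.supp).Adj ⟨u, hu⟩ ⟨v, hv⟩ := hadj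
    rcases (FC C).edges_comparable _ _ hmu hmv hadj' with h | h
    · exact Or.inl ⟨C, hu, hv, h⟩
    · exact Or.inr ⟨C, hv, hu, h⟩
  · -- comp_chain
    intro v hv w₁ w₂ y₁ y₂ ⟨p₁, hp₁⟩ ⟨p₂, hp₂⟩ ha1 ha2 hy1 hy2
    set C := G.connectedComponentMk v with hC
    have hsupp1 : ∀ x ∈ p₁.support, x ∈ C.supp := by
      intro x hx
      exact (SimpleGraph.ConnectedComponent.sound
        (reachable_of_mem_support p₁ x hx)).symm
    have hsupp2 : ∀ x ∈ p₂.support, x ∈ C.supp := by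
      intro x hx
      exact (SimpleGraph.ConnectedComponent.sound
        (reachable_of_mem_support p₂ x hx)).symm
    have hw1C : w₁ ∈ C.supp := hsupp1 _ p₁.end_mem_support
    have hw2C : w₂ ∈ C.supp := hsupp2 _ p₂.end_mem_support
    have hy1C : y₁ ∈ C.supp := by
      rw [SimpleGraph.ConnectedComponent.mem_supp_iff, ← hw1C]
      exact (SimpleGraph.ConnectedComponent.connectedComponentMk_eq_of_adj ha1).symm
    have hy2C : y₂ ∈ C.supp := by
      rw [SimpleGraph.ConnectedComponent.mem_supp_iff, ← hw2C]
      exact (SimpleGraph.ConnectedComponent.connectedComponentMk_eq_of_adj ha2).symm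
    obtain ⟨q₁, hq₁⟩ := walk_toInduce p₁ hsupp1
    obtain ⟨q₂, hq₂⟩ := walk_toInduce p₂ hsupp2
    have hvC : v ∈ C.supp := rfl
    have hvW : (⟨v, hvC⟩ : C.supp) ∉ (FC C).W := fun hm => hv ⟨C, hvC, hm⟩
    obtain ⟨C₁, hy1', hm1⟩ := hy1
    obtain ⟨C₂, hy2', hm2⟩ := hy2
    have e1 : C₁ = C := hy1'.symm.trans hy1C
    have e2 : C₂ = C := hy2'.symm.trans hy2C
    subst e1; subst e2
    have := (FC C).comp_chain ⟨v, hvC⟩ hvW ⟨w₁, hw1C⟩ ⟨w₂, hw2C⟩ ⟨y₁, hy1C⟩ ⟨y₂, hy2C⟩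
      ⟨q₁, fun x hx hm => hp₁ x (hq₁ x hx) ⟨C, x.prop, hm⟩⟩
      ⟨q₂, fun x hx hm => hp₂ x (hq₂ x hx) ⟨C, x.prop, hm⟩⟩
      ha1 ha2 hm1 hm2
    rcases this with h | h
    · exact Or.inl ⟨C, hy1C, hy2C, h⟩
    · exact Or.inr ⟨C, hy2C, hy1C, h⟩
  · -- height
    intro c hcc
    rcases c.eq_empty_or_nonempty with rfl | ⟨x₀, hx₀⟩
    · simp
    have hx₀x₀ : anc x₀ x₀ := by
      rcases hcc x₀ hx₀ x₀ hx₀ with h | h <;> exact h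
    obtain ⟨C, hx₀C, -, -⟩ := hx₀x₀
    have hsame : ∀ x ∈ c, x ∈ C.supp := by
      intro x hx
      rcases hcc x hx x₀ hx₀ with ⟨C', hx', hx0', -⟩ | ⟨C', hx0', hx', -⟩ <;>
      · have : C' = C := hx0'.symm.trans hx₀C
        subst this
        exact hx'
    have hcard : (c.subtype (· ∈ C.supp)).card = c.card := by
      rw [Finset.card_subtype, Finset.filter_true_of_mem hsame]
    rw [← hcard]
    apply hFCh C
    intro x hx y hy
    rw [Finset.mem_subtype] at hx hy
    rcases hcc x hx y hy with ⟨C', hx', hy', ha⟩ | ⟨C', hy', hx', ha⟩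
    · have : C' = C := hx'.symm.trans (hsame x hx)
      subst this
      exact Or.inl ha
    · have : C' = C := hx'.symm.trans (hsame x hx)
      subst this
      exact Or.inr ha

private lemma tdS_extend [Fintype V] {G : SimpleGraph V} {S : Set V} (u : V) {h : ℕ}
    (hF : ∃ F' : ElimForestS (G.induce {v | v ≠ u}) (Subtype.val ⁻¹' S), F'.HeightLE h) :
    tdS G S ≤ h + 1 := by
  classical
  obtain ⟨F', hF'⟩ := hF
  set W : Set V := {x | x = u ∨ ∃ hx : x ≠ u, (⟨x, hx⟩ : ↥{v | v ≠ u}) ∈ F'.W} with hWdef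
  set anc : V → V → Prop := fun a b => (a = u ∧ b ∈ W) ∨
    (∃ (ha : a ≠ u) (hb : b ≠ u), F'.anc ⟨a, ha⟩ ⟨b, hb⟩) with hancdef
  have hancW : ∀ a b, anc a b → a ∈ W ∧ b ∈ W := by
    rintro a b (⟨rfl, hb⟩ | ⟨ha, hb, hab⟩)
    · exact ⟨Or.inl rfl, hb⟩
    · obtain ⟨h1, h2⟩ := F'.anc_dom _ _ hab
      exact ⟨Or.inr ⟨ha, h1⟩, Or.inr ⟨hb, h2⟩⟩
  have huW : u ∈ W := Or.inl rfl
  refine tdS_le ⟨⟨W, ?_, anc, hancW, ?_, ?_, ?_, ?_, ?_, ?_⟩, ?_⟩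
  · -- S_subset
    intro s hs
    by_cases hsu : s = u
    · exact Or.inl hsu
    · exact Or.inr ⟨hsu, F'.S_subset hs⟩
  · -- refl
    rintro v (rfl | ⟨hv, hm⟩)
    · exact Or.inl ⟨rfl, huW⟩
    · exact Or.inr ⟨hv, hv, F'.anc_refl _ hm⟩
  · -- antisymm
    rintro a b (⟨rfl, hb⟩ | ⟨ha, hb, hab⟩) (⟨hbu, hau⟩ | ⟨hb', ha', hba⟩)
    · exact hbu.symm
    · exact absurd rfl ha'
    · exact absurd hbu hb
    · exact congrArg Subtype.val (F'.anc_antisymm _ _ hab hba)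
  · -- trans
    rintro a b c (⟨rfl, hb⟩ | ⟨ha, hb, hab⟩) (⟨hbu, hcW⟩ | ⟨hb', hc', hbc⟩)
    · exact Or.inl ⟨rfl, hcW⟩
    · exact Or.inl ⟨rfl, (hancW _ _ (Or.inr ⟨hb', hc', hbc⟩)).2⟩
    · exact absurd hbu hb
    · exact Or.inr ⟨ha, hc', F'.anc_trans _ _ _ hab hbc⟩
  · -- ancestors chain
    rintro u₁ u₂ v (⟨rfl, hv⟩ | ⟨h1, hv1, ha1⟩) h2'
    · exact Or.inl (Or.inl ⟨rfl, (hancW _ _ h2').1⟩)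
    · rcases h2' with ⟨rfl, hv'⟩ | ⟨h2, hv2, ha2⟩
      · exact Or.inr (Or.inl ⟨rfl, (hancW _ _ (Or.inr ⟨h1, hv1, ha1⟩)).1⟩)
      · rcases F'.ancestors_chain _ _ _ ha1 ha2 with h | h
        · exact Or.inl (Or.inr ⟨h1, h2, h⟩)
        · exact Or.inr (Or.inr ⟨h2, h1, h⟩)
  · -- edges comparable
    intro a b haW hbW hadj
    by_cases hau : a = u
    · exact Or.inl (Or.inl ⟨hau, hbW⟩)
    by_cases hbu : b = u
    · exact Or.inr (Or.inl ⟨hbu, haW⟩)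
    have hma : (⟨a, hau⟩ : ↥{v | v ≠ u}) ∈ F'.W := by
      rcases haW with h | ⟨_, hm⟩
      · exact absurd h hau
      · exact hm
    have hmb : (⟨b, hbu⟩ : ↥{v | v ≠ u}) ∈ F'.W := by
      rcases hbW with h | ⟨_, hm⟩
      · exact absurd h hbu
      · exact hm
    have hadj' : (G.induce {v | v ≠ u}).Adj ⟨a, hau⟩ ⟨b, hbu⟩ := hadj
    rcases F'.edges_comparable _ _ hma hmb hadj' with h | h
    · exact Or.inl (Or.inr ⟨hau, hbu, h⟩)
    · exact Or.inr (Or.inr ⟨hbu, hau, h⟩)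
  · -- comp_chain
    intro v hv w₁ w₂ y₁ y₂ ⟨p₁, hp₁⟩ ⟨p₂, hp₂⟩ ha1 ha2 hy1 hy2
    by_cases hy1u : y₁ = u
    · exact Or.inl (Or.inl ⟨hy1u, hy2⟩)
    by_cases hy2u : y₂ = u
    · exact Or.inr (Or.inl ⟨hy2u, hy1⟩)
    have hvu : v ≠ u := fun hh => hv (hh ▸ huW)
    have hsupp1 : ∀ x ∈ p₁.support, x ∈ {v | v ≠ u} := by
      intro x hx hxu
      exact hp₁ x hx (hxu ▸ huW)
    have hsupp2 : ∀ x ∈ p₂.support, x ∈ {v | v ≠ u} := by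
      intro x hx hxu
      exact hp₂ x hx (hxu ▸ huW)
    obtain ⟨q₁, hq₁⟩ := walk_toInduce p₁ hsupp1
    obtain ⟨q₂, hq₂⟩ := walk_toInduce p₂ hsupp2
    have hvW' : (⟨v, hvu⟩ : ↥{v | v ≠ u}) ∉ F'.W := fun hm => hv (Or.inr ⟨hvu, hm⟩)
    have hw1u : w₁ ≠ u := hsupp1 _ p₁.end_mem_support
    have hw2u : w₂ ≠ u := hsupp2 _ p₂.end_mem_support
    have hm1 : (⟨y₁, hy1u⟩ : ↥{v | v ≠ u}) ∈ F'.W := by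
      rcases hy1 with h | ⟨_, hm⟩
      · exact absurd h hy1u
      · exact hm
    have hm2 : (⟨y₂, hy2u⟩ : ↥{v | v ≠ u}) ∈ F'.W := by
      rcases hy2 with h | ⟨_, hm⟩
      · exact absurd h hy2u
      · exact hm
    have ha1' : (G.induce {v | v ≠ u}).Adj ⟨w₁, hw1u⟩ ⟨y₁, hy1u⟩ := ha1
    have ha2' : (G.induce {v | v ≠ u}).Adj ⟨w₂, hw2u⟩ ⟨y₂, hy2u⟩ := ha2
    have := F'.comp_chain ⟨v, hvu⟩ hvW' ⟨w₁, hw1u⟩ ⟨w₂, hw2u⟩ ⟨y₁, hy1u⟩ ⟨y₂, hy2u⟩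
      ⟨q₁, fun x hx hm => hp₁ x (hq₁ x hx) (Or.inr ⟨x.prop, hm⟩)⟩
      ⟨q₂, fun x hx hm => hp₂ x (hq₂ x hx) (Or.inr ⟨x.prop, hm⟩)⟩
      ha1' ha2' hm1 hm2
    rcases this with h | h
    · exact Or.inl (Or.inr ⟨hy1u, hy2u, h⟩)
    · exact Or.inr (Or.inr ⟨hy2u, hy1u, h⟩)
  · -- height
    intro c hcc
    have hsub : (c.filter (· ≠ u)).card ≤ h := by
      have : (c.subtype (· ≠ u)).card = (c.filter (· ≠ u)).card := Finset.card_subtype _ _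
      rw [← this]
      apply hF'
      intro x hx y hy
      rw [Finset.mem_subtype] at hx hy
      rcases hcc x hx y hy with (⟨hxu, -⟩ | ⟨hx', hy', ha⟩) | (⟨hyu, -⟩ | ⟨hy', hx', ha⟩)
      · exact absurd hxu x.prop
      · exact Or.inl ha
      · exact absurd hyu y.prop
      · exact Or.inr ha
    have hsplit := Finset.card_filter_add_card_filter_not (s := c) (p := (· ≠ u))
    have hle1 : (c.filter (fun x => ¬ x ≠ u)).card ≤ 1 := by
      apply Finset.card_le_one.mpr
      intro a ha b hb
      rw [Finset.mem_filter] at ha hb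
      rw [not_not] at *
      rw [ha.2, hb.2]
    omega

end AuxTD

/-- the inductive characterization of focused treedepth `td(G,S)`. -/
theorem tdS_recursion {V : Type} [Fintype V] (G : SimpleGraph V) (S : Set V) :
    (S = ∅ → tdS G S = 0) ∧
    (Nonempty V →
      tdS G S = ⨆ c : G.ConnectedComponent,
        tdS (G.induce c.supp) (Subtype.val ⁻¹' S)) ∧
    (G.Connected → S.Nonempty →
      tdS G S = 1 + ⨅ u : V, tdS (G.induce {v | v ≠ u}) (Subtype.val ⁻¹' S)) := by
  classical
  refine ⟨?_, ?_, ?_⟩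
  · -- S = ∅
    rintro rfl
    refine Nat.le_zero.mp (tdS_le ⟨⟨∅, Set.empty_subset _, fun _ _ => False,
      fun _ _ h => h.elim, fun v hv => absurd hv (Set.notMem_empty v),
      fun _ _ h => h.elim, fun _ _ _ h => h.elim, fun _ _ _ h => h.elim,
      fun u _ hu => absurd hu (Set.notMem_empty u),
      fun _ _ _ _ _ _ _ _ _ _ hy1 => absurd hy1 (Set.notMem_empty _)⟩, ?_⟩)
    intro c hcc
    rw [Nat.le_zero, Finset.card_eq_zero, Finset.eq_empty_iff_forall_notMem]
    intro x hx
    rcases hcc x hx x hx with h | h <;> exact h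
  · -- components
    intro hne
    set f : G.ConnectedComponent → ℕ :=
      fun C => tdS (G.induce C.supp) (Subtype.val ⁻¹' S) with hf
    haveI : Nonempty G.ConnectedComponent := ⟨G.connectedComponentMk hne.some⟩
    refine le_antisymm (tdS_combine G S ?_) (ciSup_le ?_)
    · intro C
      exact le_ciSup (Set.finite_range f).bddAbove C
    · intro C
      obtain ⟨F, hF⟩ := exists_elimForest_tdS G S
      exact tdS_le ⟨F.restrict C.supp, F.restrict_heightLE C.supp hF⟩
  · -- connected recursion
    intro hG hS
    set f : V → ℕ := fun u => tdS (G.induce {v | v ≠ u}) (Subtype.val ⁻¹' S) with hf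
    haveI : Nonempty V := ⟨hS.some⟩
    refine le_antisymm ?_ ?_
    · -- upper bound
      have hmem : sInf (Set.range f) ∈ Set.range f := Nat.sInf_mem (Set.range_nonempty f)
      obtain ⟨u₀, hu₀⟩ := hmem
      have h1 : tdS G S ≤ f u₀ + 1 := tdS_extend u₀ (exists_elimForest_tdS _ _)
      have h2 : iInf f = f u₀ := hu₀.symm
      omega
    · -- lower bound
      obtain ⟨F, hF⟩ := exists_elimForest_tdS G S
      obtain ⟨s₀, hs₀⟩ := hS
      obtain ⟨r, hrW, hr⟩ := exists_root F hG ⟨s₀, F.S_subset hs₀⟩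
      have h1 : 1 ≤ tdS G S := by
        have hch : ∀ x ∈ ({r} : Finset V), ∀ y ∈ ({r} : Finset V),
            F.anc x y ∨ F.anc y x := by
          intro x hx y hy
          rw [Finset.mem_singleton] at hx hy
          rw [hx, hy]
          exact Or.inl (F.anc_refl r hrW)
        have := hF {r} hch
        simpa using this
      have h2 : f r ≤ tdS G S - 1 :=
        tdS_le ⟨F.restrict _, F.restrict_root_heightLE hr hrW hF⟩
      have h3 : iInf f ≤ f r := Nat.sInf_le ⟨r, rfl⟩
      omega
end

section
/- Let G be a graph, w a positive integer, S ⊆ V(G), and let (A',B') and (P,Q) be separations of G with P ⊆ A' and Q ⊇ B'. If (A',B') is (w,S)-good and there are |V(P) ∩ V(Q)| vertex-disjoint V(P)–V(B') paths in G, then (P,Q) is (w,S)-good. -/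
open SimpleGraph

/-- A separation `(A,B)` of `G` is `(w,S)`-good: it has order at most `w` and
`(A, S ∩ V(A))` has a path decomposition of width at most `2w-2` whose last bag
contains `V(A) ∩ V(B)`. -/
def IsGoodSep {V : Type} (G : SimpleGraph V) (w : ℕ) (S : Set V)
    (s : Separation G) : Prop :=
  s.order ≤ w ∧ ∃ (m : ℕ) (hm : 0 < m)
    (d : PathDecompS s.A.coe (Subtype.val ⁻¹' S) m),
    (∀ i, (d.bag i).ncard ≤ 2 * w - 1) ∧
    Subtype.val ⁻¹' s.B.verts ⊆ d.bag ⟨m - 1, Nat.sub_lt hm Nat.one_pos⟩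

namespace Aux

variable {V : Type} {G : SimpleGraph V}

lemma sep_mem (s : Separation G) (x : V) : x ∈ s.A.verts ∨ x ∈ s.B.verts := by
  have : x ∈ (s.A ⊔ s.B).verts := by rw [s.union_eq, Subgraph.verts_top]; trivial
  simpa [Subgraph.verts_sup] using this

lemma sep_adj (s : Separation G) {u v : V} (h : G.Adj u v) : s.A.Adj u v ∨ s.B.Adj u v := by
  have : (s.A ⊔ s.B).Adj u v := by rw [s.union_eq]; simpa [Subgraph.top_adj] using h
  simpa [Subgraph.sup_adj] using this

lemma cross (s : Separation G) : ∀ {u v : V} (p : G.Walk u v), u ∈ s.A.verts → v ∈ s.B.verts →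
    ∃ x ∈ p.support, x ∈ s.A.verts ∧ x ∈ s.B.verts := by
  intro u v p
  induction p with
  | nil => intro hu hv; exact ⟨_, by simp, hu, hv⟩
  | @cons u u₁ v h p ih =>
    intro hu hv
    by_cases hB : u ∈ s.B.verts
    · exact ⟨u, by simp, hu, hB⟩
    · rcases sep_adj s h with hA | hB'
      · obtain ⟨x, hx, hxx⟩ := ih hA.snd_mem hv
        exact ⟨x, by simp [hx], hxx⟩
      · exact absurd hB'.fst_mem hB

lemma first_aux {T : Set V} : ∀ {u v : V} (R : G.Walk u v), (∃ x ∈ R.support, x ∈ T) →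
    ∃ (z : V) (_ : z ∈ T) (pre : G.Walk u z) (post : G.Walk z v),
      pre.append post = R ∧ ∀ x ∈ pre.support, x ∈ T → x = z := by
  intro u v R
  induction R with
  | nil =>
    rintro ⟨x, hx, hxT⟩
    simp only [Walk.support_nil, List.mem_singleton] at hx
    subst hx
    exact ⟨x, hxT, .nil, .nil, rfl, by simp⟩
  | @cons u u₁ v h R ih =>
    intro hx
    by_cases hu : u ∈ T
    · exact ⟨u, hu, .nil, .cons h R, rfl, by simp⟩
    · obtain ⟨x, hx, hxT⟩ := hx
      have hx' : x ∈ R.support := by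
        rcases List.mem_cons.mp (Walk.support_cons h R ▸ hx : x ∈ u :: R.support) with h' | h'
        · exact absurd (h' ▸ hxT) hu
        · exact h'
      obtain ⟨z, hz, pre, post, heq, hcond⟩ := ih ⟨x, hx', hxT⟩
      refine ⟨z, hz, .cons h pre, post, by rw [Walk.cons_append, heq], ?_⟩
      intro y hy hyT
      rcases List.mem_cons.mp (Walk.support_cons h pre ▸ hy : y ∈ u :: pre.support) with h' | h'
      · exact absurd (h' ▸ hyT) hu
      · exact hcond y h' hyT

lemma not_start_mem_dropUntil [DecidableEq V] {u v x : V} {p : G.Walk u v} (hp : p.IsPath)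
    (hx : x ∈ p.support) (hne : x ≠ u) : u ∉ (p.dropUntil x hx).support := by
  intro hmem
  have hnodup : p.support.Nodup := hp.support_nodup
  rw [← p.take_spec hx, Walk.support_append] at hnodup
  have hdisj := List.disjoint_of_nodup_append hnodup
  have h1 : u ∈ (p.takeUntil x hx).support := (p.takeUntil x hx).start_mem_support
  have h2 : u ∈ (p.dropUntil x hx).support.tail := by
    rw [(p.dropUntil x hx).support_eq_cons] at hmem
    rcases List.mem_cons.mp hmem with h' | h'
    · exact absurd h'.symm hne
    · exact h'
  exact hdisj h1 h2

end Aux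

namespace Aux

variable {V : Type} {G : SimpleGraph V} {m : ℕ}

/-- One-step relation: an `A`-edge between two vertices outside all bags. -/
def Reach (s : Separation G) (X : Fin m → Set V) : V → V → Prop :=
  Relation.ReflTransGen (fun a b => s.A.Adj a b ∧ ¬(∃ j, a ∈ X j) ∧ ¬(∃ j, b ∈ X j))

variable {s : Separation G} {X : Fin m → Set V} {mb : Fin m}

lemma exists_prev {u v : V} (p : G.Walk u v) (hne : u ≠ v) :
    ∃ o ∈ p.support, G.Adj o v := by
  cases hq : p.reverse with
  | nil => exact absurd rfl hne
  | @cons _ o _ h₂ q =>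
    refine ⟨o, ?_, h₂.symm⟩
    have : o ∈ p.reverse.support := by rw [hq]; simp [q.start_mem_support]
    rwa [Walk.support_reverse, List.mem_reverse] at this

lemma subA (hlastm : ∀ x, x ∈ s.A.verts → x ∈ s.B.verts → x ∈ X mb)
    {v : V} {jc : Fin m}
    (hjc : ∀ w y, Reach s X v w → s.A.Adj w y → (∃ j, y ∈ X j) → y ∈ X jc) :
    ∀ {a z : V} (p : G.Walk a z), a ∈ s.A.verts → ¬(∃ j, a ∈ X j) → (∃ j, z ∈ X j) →
      (∀ t ∈ p.support, (∃ j, t ∈ X j) → t = z) → Reach s X v a → z ∈ X jc := by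
  intro a z p
  induction p with
  | nil => intro haA ha hz _ _; exact absurd hz ha
  | @cons a a₁ z h p' ih =>
    intro haA ha hz hcond hreach
    have hAA : s.A.Adj a a₁ := by
      rcases sep_adj s h with h' | h'
      · exact h'
      · exact absurd (hlastm a haA h'.fst_mem) (fun hh => ha ⟨mb, hh⟩)
    by_cases h1 : ∃ j, a₁ ∈ X j
    · have : a₁ = z := hcond a₁ (by simp) h1
      subst this
      exact hjc a a₁ hreach hAA h1
    · exact ih hAA.snd_mem h1 hz (fun t ht => hcond t (by simp [ht]))
        (hreach.tail ⟨hAA, ha, h1⟩)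

lemma common_bag (hXA : ∀ j, X j ⊆ s.A.verts)
    (hlastm : ∀ x, x ∈ s.A.verts → x ∈ s.B.verts → x ∈ X mb)
    (hE : ∀ u v, (∃ j, u ∈ X j) → (∃ j, v ∈ X j) → s.A.Adj u v → ∃ j, u ∈ X j ∧ v ∈ X j)
    (hComp : ∀ v, v ∈ s.A.verts → ¬(∃ j, v ∈ X j) →
      ∃ jc, ∀ w y, Reach s X v w → s.A.Adj w y → (∃ j, y ∈ X j) → y ∈ X jc)
    {z z' : V} (R : G.Walk z z') (hR : R.IsPath) (hz : ∃ j, z ∈ X j) (hz' : ∃ j, z' ∈ X j)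
    (hint : ∀ x ∈ R.support, (∃ j, x ∈ X j) → x = z ∨ x = z') :
    ∃ j, z ∈ X j ∧ z' ∈ X j := by
  cases R with
  | nil => obtain ⟨j, hj⟩ := hz; exact ⟨j, hj, hj⟩
  | @cons _ a₁ _ h R' =>
    rw [Walk.cons_isPath_iff] at hR
    obtain ⟨hR', hznot⟩ := hR
    by_cases ha₁z' : a₁ = z'
    · subst ha₁z'
      rcases sep_adj s h with h' | h'
      · exact hE z a₁ hz hz' h'
      · exact ⟨mb, hlastm z (hXA _ hz.choose_spec) h'.fst_mem,
          hlastm a₁ (hXA _ hz'.choose_spec) h'.snd_mem⟩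
    · by_cases ha₁A : a₁ ∈ s.A.verts
      · have ha₁X : ¬∃ j, a₁ ∈ X j := by
          intro hX
          rcases hint a₁ (by simp) hX with h' | h'
          · exact hznot (h' ▸ R'.start_mem_support)
          · exact ha₁z' h'
        obtain ⟨jc, hjc⟩ := hComp a₁ ha₁A ha₁X
        have hAA : s.A.Adj a₁ z := by
          rcases sep_adj s h with h' | h'
          · exact h'.symm
          · exact absurd ⟨mb, hlastm a₁ ha₁A h'.snd_mem⟩ ha₁X
        have hzjc : z ∈ X jc := hjc a₁ z Relation.ReflTransGen.refl hAA hz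
        have hz'jc : z' ∈ X jc := by
          refine subA hlastm hjc R' ha₁A ha₁X hz' ?_ Relation.ReflTransGen.refl
          intro t ht htX
          rcases hint t (by simp [ht]) htX with h' | h'
          · exact absurd (h' ▸ ht) hznot
          · exact h'
        exact ⟨jc, hzjc, hz'jc⟩
      · have hzB : z ∈ s.B.verts := by
          rcases sep_adj s h with h' | h'
          · exact absurd h'.snd_mem ha₁A
          · exact h'.fst_mem
        have hzmb : z ∈ X mb := hlastm z (hXA _ hz.choose_spec) hzB
        have hz'A : z' ∈ s.A.verts := hXA _ hz'.choose_spec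
        obtain ⟨t, htA, pre, post, heq, hcond⟩ :=
          first_aux (T := s.A.verts) R' ⟨z', R'.end_mem_support, hz'A⟩
        have htR' : t ∈ R'.support := by
          rw [← heq, Walk.mem_support_append_iff]; exact Or.inl pre.end_mem_support
        have hat : a₁ ≠ t := fun hh => ha₁A (hh ▸ htA)
        obtain ⟨o, hoPre, h₂⟩ := exists_prev pre hat
        have honotA : o ∉ s.A.verts := fun hh => h₂.ne (hcond o hoPre hh)
        have htB : t ∈ s.B.verts := by
          rcases sep_adj s h₂ with h' | h'
          · exact absurd h'.fst_mem honotA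
          · exact h'.snd_mem
        have htmb : t ∈ X mb := hlastm t htA htB
        rcases hint t (by simp [htR']) ⟨mb, htmb⟩ with h' | h'
        · exact absurd (h' ▸ htR') hznot
        · exact ⟨mb, hzmb, h' ▸ htmb⟩

lemma conv_aux (hXA : ∀ j, X j ⊆ s.A.verts)
    (hlastm : ∀ x, x ∈ s.A.verts → x ∈ s.B.verts → x ∈ X mb)
    (hE : ∀ u v, (∃ j, u ∈ X j) → (∃ j, v ∈ X j) → s.A.Adj u v → ∃ j, u ∈ X j ∧ v ∈ X j)
    (hInt : ∀ (x : V) (j₁ j₂ j₃ : Fin m), j₁ ≤ j₂ → j₂ ≤ j₃ → x ∈ X j₁ → x ∈ X j₃ → x ∈ X j₂)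
    (hComp : ∀ v, v ∈ s.A.verts → ¬(∃ j, v ∈ X j) →
      ∃ jc, ∀ w y, Reach s X v w → s.A.Adj w y → (∃ j, y ∈ X j) → y ∈ X jc) :
    ∀ (n : ℕ) {u v : V} (R : G.Walk u v), R.length ≤ n → R.IsPath →
      ∀ (j₁ j₂ l : Fin m), u ∈ X j₁ → v ∈ X j₂ → j₁ ≤ l → l ≤ j₂ →
        ∃ x ∈ R.support, x ∈ X l := by
  intro n
  induction n with
  | zero =>
    intro u v R hlen hR j₁ j₂ l hu hv h1 h2
    have : u = v := by
      cases R with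
      | nil => rfl
      | cons h R' => simp [Walk.length_cons] at hlen
    subst this
    exact ⟨u, R.start_mem_support, hInt u j₁ l j₂ h1 h2 hu hv⟩
  | succ n ih =>
    intro u v R hlen hR j₁ j₂ l hu hv h1 h2
    cases R with
    | nil => exact ⟨u, by simp, hInt u j₁ l j₂ h1 h2 hu hv⟩
    | @cons _ a₁ _ h R' =>
      obtain ⟨hR', hunot⟩ := (Walk.cons_isPath_iff h R').mp hR
      obtain ⟨z, hzX, pre, post, heq, hcond⟩ :=
        first_aux (T := {x | ∃ j, x ∈ X j}) R' ⟨v, R'.end_mem_support, ⟨j₂, hv⟩⟩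
      have hpre : pre.IsPath := Walk.IsPath.of_append_left (heq ▸ hR')
      have hpost : post.IsPath := Walk.IsPath.of_append_right (heq ▸ hR')
      have hseg : (Walk.cons h pre).IsPath := by
        rw [Walk.cons_isPath_iff]
        refine ⟨hpre, fun hh => hunot ?_⟩
        rw [← heq, Walk.mem_support_append_iff]; exact Or.inl hh
      have hintseg : ∀ x ∈ (Walk.cons h pre).support, (∃ j, x ∈ X j) → x = u ∨ x = z := by
        intro x hx hxX
        rcases List.mem_cons.mp (Walk.support_cons h pre ▸ hx) with h' | h'
        · exact Or.inl h'
        · exact Or.inr (hcond x h' hxX)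
      obtain ⟨j₀, huj₀, hzj₀⟩ := common_bag hXA hlastm hE hComp (Walk.cons h pre) hseg
        ⟨j₁, hu⟩ hzX hintseg
      by_cases hl : l ≤ j₀
      · exact ⟨u, by simp, hInt u j₁ l j₀ h1 hl hu huj₀⟩
      · have hl' : j₀ ≤ l := le_of_lt (lt_of_not_ge hl)
        have hlen' : post.length ≤ n := by
          have h1 := congrArg Walk.length heq
          rw [Walk.length_append] at h1
          simp only [Walk.length_cons] at hlen
          omega
        obtain ⟨x, hx, hxl⟩ := ih post hlen' hpost j₀ j₂ l hzj₀ hv hl' h2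
        refine ⟨x, ?_, hxl⟩
        have : x ∈ R'.support := by
          rw [← heq, Walk.mem_support_append_iff]; exact Or.inr hx
        simp [this]

lemma convWalk (hXA : ∀ j, X j ⊆ s.A.verts)
    (hlastm : ∀ x, x ∈ s.A.verts → x ∈ s.B.verts → x ∈ X mb)
    (hE : ∀ u v, (∃ j, u ∈ X j) → (∃ j, v ∈ X j) → s.A.Adj u v → ∃ j, u ∈ X j ∧ v ∈ X j)
    (hInt : ∀ (x : V) (j₁ j₂ j₃ : Fin m), j₁ ≤ j₂ → j₂ ≤ j₃ → x ∈ X j₁ → x ∈ X j₃ → x ∈ X j₂)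
    (hComp : ∀ v, v ∈ s.A.verts → ¬(∃ j, v ∈ X j) →
      ∃ jc, ∀ w y, Reach s X v w → s.A.Adj w y → (∃ j, y ∈ X j) → y ∈ X jc)
    {u v : V} (R : G.Walk u v) (hR : R.IsPath) {x₁ x₂ : V}
    (h₁ : x₁ ∈ R.support) (h₂ : x₂ ∈ R.support) {j₁ j₂ l : Fin m}
    (hx₁ : x₁ ∈ X j₁) (hx₂ : x₂ ∈ X j₂) (hj₁ : j₁ ≤ l) (hj₂ : l ≤ j₂) :
    ∃ x ∈ R.support, x ∈ X l := by
  classical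
  set R₁ := R.dropUntil x₁ h₁ with hR₁
  have hR₁path : R₁.IsPath := hR.dropUntil h₁
  by_cases hx₂1 : x₂ ∈ R₁.support
  · set q := R₁.takeUntil x₂ hx₂1 with hq
    obtain ⟨x, hx, hxl⟩ := conv_aux hXA hlastm hE hInt hComp q.length q le_rfl
      (hR₁path.takeUntil hx₂1) j₁ j₂ l hx₁ hx₂ hj₁ hj₂
    exact ⟨x, R.support_dropUntil_subset h₁ (R₁.support_takeUntil_subset hx₂1 hx), hxl⟩
  · have hx₂0 : x₂ ∈ (R.takeUntil x₁ h₁).support := by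
      have := h₂
      rw [← Walk.take_spec R h₁, Walk.mem_support_append_iff] at this
      rcases this with h' | h'
      · exact h'
      · exact absurd h' hx₂1
    set R₀ := R.takeUntil x₁ h₁ with hR₀
    have hR₀path : R₀.IsPath := hR.takeUntil h₁
    set q := (R₀.dropUntil x₂ hx₂0).reverse with hq
    obtain ⟨x, hx, hxl⟩ := conv_aux hXA hlastm hE hInt hComp q.length q le_rfl
      ((hR₀path.dropUntil hx₂0).reverse) j₁ j₂ l hx₁ hx₂ hj₁ hj₂
    rw [hq, Walk.support_reverse, List.mem_reverse] at hx
    exact ⟨x, R.support_takeUntil_subset h₁ (R₀.support_dropUntil_subset hx₂0 hx), hxl⟩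

end Aux

/-- if `(A',B')` is `(w,S)`-good, `(P,Q) ≤ (A',B')`, and there are
`|V(P) ∩ V(Q)|` vertex-disjoint `V(P)`–`V(B')` paths in `G`, then `(P,Q)` is
`(w,S)`-good. -/
theorem goodSep_of_linked {V : Type} [Fintype V] (G : SimpleGraph V)
    (w : ℕ) (hw : 0 < w) (S : Set V) (s' pq : Separation G)
    (hA : pq.A ≤ s'.A) (hB : s'.B ≤ pq.B)
    (hgood : IsGoodSep G w S s')
    (hpaths : Nonempty (DisjointXYPaths G pq.A.verts s'.B.verts pq.order)) :
    IsGoodSep G w S pq := by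
  classical
  obtain ⟨horder, m, hm, d, hbag, hlastbag⟩ := hgood
  obtain ⟨D⟩ := hpaths
  set k := pq.order with hk
  -- ambient bags
  set X : Fin m → Set V := fun j => Subtype.val '' d.bag j with hX
  set mb : Fin m := ⟨m - 1, Nat.sub_lt hm Nat.one_pos⟩ with hmb
  have hPA : pq.A.verts ⊆ s'.A.verts := hA.1
  have memX : ∀ (x : ↥s'.A.verts) (j : Fin m), (x : V) ∈ X j ↔ x ∈ d.bag j :=
    fun x j => Subtype.val_injective.mem_set_image
  have hXA : ∀ j, X j ⊆ s'.A.verts := by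
    rintro j x ⟨y, hy, rfl⟩; exact y.2
  have hHmem : ∀ (x : ↥s'.A.verts), (∃ j, (x : V) ∈ X j) ↔ x ∈ ⋃ j, d.bag j := by
    intro x
    simp only [Set.mem_iUnion]
    exact exists_congr fun j => memX x j
  have hlastm : ∀ x, x ∈ s'.A.verts → x ∈ s'.B.verts → x ∈ X mb := by
    intro x hxA hxB
    exact (memX ⟨x, hxA⟩ mb).mpr (hlastbag (by exact hxB))
  have hE : ∀ u v, (∃ j, u ∈ X j) → (∃ j, v ∈ X j) → s'.A.Adj u v →
      ∃ j, u ∈ X j ∧ v ∈ X j := by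
    intro u v hu hv hadj
    have huA : u ∈ s'.A.verts := hadj.fst_mem
    have hvA : v ∈ s'.A.verts := hadj.snd_mem
    obtain ⟨j, hj1, hj2⟩ := d.edge_in_bag ⟨u, huA⟩ ⟨v, hvA⟩
      ((hHmem _).mp hu) ((hHmem _).mp hv) hadj
    exact ⟨j, (memX ⟨u, huA⟩ j).mpr hj1, (memX ⟨v, hvA⟩ j).mpr hj2⟩
  have hInt : ∀ (x : V) (j₁ j₂ j₃ : Fin m), j₁ ≤ j₂ → j₂ ≤ j₃ →
      x ∈ X j₁ → x ∈ X j₃ → x ∈ X j₂ := by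
    intro x j₁ j₂ j₃ h12 h23 h1 h3
    have hxA : x ∈ s'.A.verts := hXA j₁ h1
    exact (memX ⟨x, hxA⟩ j₂).mpr (d.interval ⟨x, hxA⟩ j₁ j₂ j₃ h12 h23
      ((memX _ _).mp h1) ((memX _ _).mp h3))
  have hComp : ∀ v, v ∈ s'.A.verts → ¬(∃ j, v ∈ X j) →
      ∃ jc, ∀ w y, Aux.Reach s' X v w → s'.A.Adj w y → (∃ j, y ∈ X j) → y ∈ X jc := by
    intro v hvA hvX
    have hv' : (⟨v, hvA⟩ : ↥s'.A.verts) ∉ ⋃ j, d.bag j := fun hh => hvX ((hHmem _).mpr hh)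
    obtain ⟨jc, hjc⟩ := d.comp_in_bag ⟨v, hvA⟩ hv'
    refine ⟨jc, ?_⟩
    intro w y hreach hadj hyX
    have hwA : w ∈ s'.A.verts := hadj.fst_mem
    have hyA : y ∈ s'.A.verts := hadj.snd_mem
    have hRO : ∀ (w' : V) (hw' : w' ∈ s'.A.verts), Aux.Reach s' X v w' →
        ReachOutside s'.A.coe (⋃ j, d.bag j) ⟨v, hvA⟩ ⟨w', hw'⟩ := by
      intro w' hw' hr
      induction hr with
      | refl => exact ⟨.nil, by simpa using hv'⟩
      | @tail b c hvb hbc ih =>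
        have hbA : b ∈ s'.A.verts := hbc.1.fst_mem
        obtain ⟨p, hp⟩ := ih hbA
        refine ⟨p.concat (show s'.A.coe.Adj ⟨b, hbA⟩ ⟨c, hw'⟩ from hbc.1), ?_⟩
        intro t ht
        rw [Walk.support_concat] at ht
        rcases List.mem_append.mp ht with h' | h'
        · exact hp t h'
        · have : t = (⟨c, hw'⟩ : ↥s'.A.verts) := by simpa using h'
          subst this
          exact fun hh => hbc.2.2 ((hHmem _).mpr hh)
    exact (memX ⟨y, hyA⟩ jc).mpr (hjc ⟨w, hwA⟩ ⟨y, hyA⟩ (hRO w hwA hreach) hadj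
      ((hHmem _).mp hyX))
  -- the linkage vertices
  have hcross : ∀ i : Fin k, ∃ x, x ∈ (D.p i).support ∧ x ∈ pq.A.verts ∧ x ∈ pq.B.verts := by
    intro i
    obtain ⟨x, hx, h1, h2⟩ := Aux.cross pq (D.p i) (D.mem_X i) (hB.1 (D.mem_Y i))
    exact ⟨x, hx, h1, h2⟩
  choose vv hvsup hvP hvQ using hcross
  have vinj : Function.Injective vv := by
    intro i j hij
    by_contra hne
    exact D.disjoint i j hne (vv i) (hvsup i) (hij ▸ hvsup j)
  have hsurj : ∀ x, x ∈ pq.A.verts → x ∈ pq.B.verts → ∃ i, vv i = x := by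
    have hrange : Set.range vv ⊆ pq.A.verts ∩ pq.B.verts := by
      rintro x ⟨i, rfl⟩; exact ⟨hvP i, hvQ i⟩
    have hcard : (Set.range vv).ncard = k := by
      rw [← Set.image_univ, Set.ncard_image_of_injective _ vinj, Set.ncard_univ,
        Nat.card_eq_fintype_card, Fintype.card_fin]
    have heqr : Set.range vv = pq.A.verts ∩ pq.B.verts := by
      refine Set.eq_of_subset_of_ncard_le hrange ?_ (Set.toFinite _)
      rw [hcard]
      exact le_of_eq rfl
    intro x hx1 hx2
    have : x ∈ Set.range vv := heqr ▸ (⟨hx1, hx2⟩ : x ∈ pq.A.verts ∩ pq.B.verts)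
    obtain ⟨i, hi⟩ := this
    exact ⟨i, hi⟩
  -- order bound
  have hkw : k ≤ w := by
    have hcross' : ∀ i : Fin k, ∃ x, x ∈ (D.p i).support ∧ x ∈ s'.A.verts ∧ x ∈ s'.B.verts := by
      intro i
      obtain ⟨x, hx, h1, h2⟩ := Aux.cross s' (D.p i) (hPA (D.mem_X i)) (D.mem_Y i)
      exact ⟨x, hx, h1, h2⟩
    choose uu husup huA huB using hcross'
    have hfinj : Function.Injective
        (fun i : Fin k => (⟨uu i, huA i, huB i⟩ : ↥(s'.A.verts ∩ s'.B.verts))) := by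
      intro i j hij
      by_contra hne
      have : uu i = uu j := congrArg Subtype.val hij
      exact D.disjoint i j hne (uu i) (husup i) (this ▸ husup j)
    calc k = Nat.card (Fin k) := by rw [Nat.card_eq_fintype_card, Fintype.card_fin]
      _ ≤ Nat.card ↥(s'.A.verts ∩ s'.B.verts) := Nat.card_le_card_of_injective _ hfinj
      _ = (s'.A.verts ∩ s'.B.verts).ncard := Nat.card_coe_set_eq _
      _ ≤ w := horder
  -- the truncated paths
  set Ri : ∀ i : Fin k, G.Walk (vv i) (D.b i) := fun i => (D.p i).dropUntil (vv i) (hvsup i)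
    with hRi
  have hRipath : ∀ i, (Ri i).IsPath := fun i => (D.isPath i).dropUntil _
  have hRisub : ∀ i, (Ri i).support ⊆ (D.p i).support :=
    fun i => (D.p i).support_dropUntil_subset _
  -- F1 : the only vertex of Ri i in P is vv i
  have hvmem : ∀ i, ∀ x, x ∈ (D.p i).support → x ∈ pq.A.verts → x ∈ pq.B.verts → x = vv i := by
    intro i x hx h1 h2
    obtain ⟨i', hi'⟩ := hsurj x h1 h2
    by_cases hii : i' = i
    · exact (hii ▸ hi').symm
    · exact absurd hx (fun hh => D.disjoint i' i hii x (hi' ▸ hvsup i') hh)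
  have F1 : ∀ i, ∀ x ∈ (Ri i).support, x ∈ pq.A.verts → x = vv i := by
    intro i x hx hxP
    by_cases hxQ : x ∈ pq.B.verts
    · exact hvmem i x (hRisub i hx) hxP hxQ
    · exfalso
      obtain ⟨y, hy, hy1, hy2⟩ := Aux.cross pq ((Ri i).dropUntil x hx) hxP (hB.1 (D.mem_Y i))
      have hyvi : y = vv i := hvmem i y
        (hRisub i ((Ri i).support_dropUntil_subset hx hy)) hy1 hy2
      have hxvi : x ≠ vv i := fun hh => hxQ (hh ▸ hvQ i)
      exact Aux.not_start_mem_dropUntil (hRipath i) hx hxvi (hyvi ▸ hy)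
  -- J sets
  have hJmb : ∀ i, ∃ x ∈ (Ri i).support, x ∈ X mb := by
    intro i
    obtain ⟨y, hy, h1, h2⟩ := Aux.cross s' (Ri i) (hPA (hvP i)) (D.mem_Y i)
    exact ⟨y, hy, hlastm y h1 h2⟩
  have hJconv : ∀ i (j₁ j₂ l : Fin m), (∃ x ∈ (Ri i).support, x ∈ X j₁) →
      (∃ x ∈ (Ri i).support, x ∈ X j₂) → j₁ ≤ l → l ≤ j₂ →
      ∃ x ∈ (Ri i).support, x ∈ X l := by
    intro i j₁ j₂ l ⟨x₁, hx₁, hx₁X⟩ ⟨x₂, hx₂, hx₂X⟩ h1 h2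
    exact Aux.convWalk hXA hlastm hE hInt hComp (Ri i) (hRipath i) hx₁ hx₂ hx₁X hx₂X h1 h2
  -- key: component bag captures J
  have KEYJ : ∀ (i : Fin k) (v₀ : V) (jc : Fin m),
      (∀ w y, Aux.Reach s' X v₀ w → s'.A.Adj w y → (∃ j, y ∈ X j) → y ∈ X jc) →
      ¬(∃ j, vv i ∈ X j) → Aux.Reach s' X v₀ (vv i) →
      ∃ x ∈ (Ri i).support, x ∈ X jc := by
    intro i v₀ jc hjc hni hr
    obtain ⟨z, hzT, pre, post, heq, hcond⟩ :=
      Aux.first_aux (T := {x | ∃ j, x ∈ X j}) (Ri i) (by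
        obtain ⟨x, hx1, hx2⟩ := hJmb i
        exact ⟨x, hx1, ⟨mb, hx2⟩⟩)
    have hzsup : z ∈ (Ri i).support := by
      rw [← heq, Walk.mem_support_append_iff]
      exact Or.inl pre.end_mem_support
    exact ⟨z, hzsup, Aux.subA hlastm hjc pre (hPA (hvP i)) hni hzT hcond hr⟩
  -- the new bags
  set Y : Fin m → Set V := fun j =>
    (X j ∩ pq.A.verts) ∪ {x | ∃ i, x = vv i ∧ ∃ z ∈ (Ri i).support, z ∈ X j} with hY
  have hYP : ∀ j, Y j ⊆ pq.A.verts := by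
    rintro j x (⟨-, h⟩ | ⟨i, rfl, -⟩)
    · exact h
    · exact hvP i
  set bags : Fin m → Set ↥pq.A.verts := fun j => {x | (x : V) ∈ Y j} with hbags
  have hbagmem : ∀ (x : ↥pq.A.verts) j, x ∈ bags j ↔ (x : V) ∈ Y j := fun x j => Iff.rfl
  -- vertices of P outside all new bags are outside all old bags and are not linkage vertices
  have hnotY : ∀ (x : ↥pq.A.verts), (∀ j, x ∉ bags j) →
      (¬∃ j, (x : V) ∈ X j) ∧ (¬∃ i, (x : V) = vv i) := by
    intro x hx
    constructor
    · rintro ⟨j, hj⟩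
      exact hx j (Or.inl ⟨hj, x.2⟩)
    · rintro ⟨i, hi⟩
      exact hx mb (Or.inr ⟨i, hi, hJmb i⟩)
  -- conversion of reachability
  have CONV : ∀ (a b : ↥pq.A.verts) (p : pq.A.coe.Walk a b),
      (∀ x ∈ p.support, x ∉ ⋃ j, bags j) → Aux.Reach s' X (a : V) (b : V) := by
    intro a b p
    induction p with
    | nil => intro _; exact Relation.ReflTransGen.refl
    | @cons a c b h p' ih =>
      intro hsup
      have hstep : s'.A.Adj (a : V) (c : V) := hA.2 h
      have hanot : ¬∃ j, (a : V) ∈ X j := by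
        have := hsup a (by simp)
        exact (hnotY a (by simpa [Set.mem_iUnion] using this)).1
      have hcnot : ¬∃ j, (c : V) ∈ X j := by
        have := hsup c (by simp)
        exact (hnotY c (by simpa [Set.mem_iUnion] using this)).1
      exact Relation.ReflTransGen.head ⟨hstep, hanot, hcnot⟩
        (ih (fun x hx => hsup x (by simp [hx])))
  -- construct the path decomposition
  refine ⟨hkw, m, hm, ?_, ?_, ?_⟩
  · refine ⟨bags, ?_, ?_, ?_, ?_⟩
    · -- S_subset
      intro x hx
      have hxA : (x : V) ∈ s'.A.verts := hPA x.2
      have : (⟨(x : V), hxA⟩ : ↥s'.A.verts) ∈ ⋃ j, d.bag j := d.S_subset hx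
      obtain ⟨j, hj⟩ := Set.mem_iUnion.mp this
      exact Set.mem_iUnion.mpr ⟨j, Or.inl ⟨(memX _ j).mpr hj, x.2⟩⟩
    · -- edge_in_bag
      intro u v hu hv hadj
      have hP' : pq.A.Adj (u : V) (v : V) := hadj
      have hAA : s'.A.Adj (u : V) (v : V) := hA.2 hP'
      obtain ⟨ju, hju⟩ := Set.mem_iUnion.mp hu
      obtain ⟨jv, hjv⟩ := Set.mem_iUnion.mp hv
      by_cases huH : ∃ j, (u : V) ∈ X j
      · by_cases hvH : ∃ j, (v : V) ∈ X j
        · obtain ⟨j, h1, h2⟩ := hE _ _ huH hvH hAA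
          exact ⟨j, Or.inl ⟨h1, u.2⟩, Or.inl ⟨h2, v.2⟩⟩
        · -- v is a linkage vertex
          obtain ⟨i, hvi⟩ : ∃ i, (v : V) = vv i := by
            rcases hjv with ⟨h'', -⟩ | ⟨i, hi, -⟩
            · exact absurd ⟨jv, h''⟩ hvH
            · exact ⟨i, hi⟩
          obtain ⟨jc, hjc⟩ := hComp (v : V) (hPA v.2) hvH
          obtain ⟨z, hz1, hz2⟩ := KEYJ i (v : V) jc hjc (hvi ▸ hvH)
            (hvi ▸ Relation.ReflTransGen.refl)
          have huX : (u : V) ∈ X jc := hjc _ _ Relation.ReflTransGen.refl hAA.symm huH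
          exact ⟨jc, Or.inl ⟨huX, u.2⟩, Or.inr ⟨i, hvi, z, hz1, hz2⟩⟩
      · obtain ⟨i, hui⟩ : ∃ i, (u : V) = vv i := by
          rcases hju with ⟨h'', -⟩ | ⟨i, hi, -⟩
          · exact absurd ⟨ju, h''⟩ huH
          · exact ⟨i, hi⟩
        obtain ⟨jc, hjc⟩ := hComp (u : V) (hPA u.2) huH
        obtain ⟨z, hz1, hz2⟩ := KEYJ i (u : V) jc hjc (hui ▸ huH)
          (hui ▸ Relation.ReflTransGen.refl)
        by_cases hvH : ∃ j, (v : V) ∈ X j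
        · have hvX : (v : V) ∈ X jc := hjc _ _ Relation.ReflTransGen.refl hAA hvH
          exact ⟨jc, Or.inr ⟨i, hui, z, hz1, hz2⟩, Or.inl ⟨hvX, v.2⟩⟩
        · obtain ⟨i', hvi'⟩ : ∃ i', (v : V) = vv i' := by
            rcases hjv with ⟨h'', -⟩ | ⟨i', hi', -⟩
            · exact absurd ⟨jv, h''⟩ hvH
            · exact ⟨i', hi'⟩
          obtain ⟨z', hz1', hz2'⟩ := KEYJ i' (u : V) jc hjc (hvi' ▸ hvH)
            (hvi' ▸ Relation.ReflTransGen.single ⟨hAA, huH, hvH⟩)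
          exact ⟨jc, Or.inr ⟨i, hui, z, hz1, hz2⟩, Or.inr ⟨i', hvi', z', hz1', hz2'⟩⟩
    · -- interval
      intro x j₁ j₂ j₃ h12 h23 h1 h3
      by_cases hxv : ∃ i, (x : V) = vv i
      · obtain ⟨i, hi⟩ := hxv
        have hmemJ : ∀ j : Fin m, x ∈ bags j → ∃ z ∈ (Ri i).support, z ∈ X j := by
          intro j hj
          rcases hj with ⟨hX', -⟩ | ⟨i', he, z, hz1, hz2⟩
          · exact ⟨vv i, (Ri i).start_mem_support, hi ▸ hX'⟩
          · have : i' = i := vinj (by rw [← he, ← hi])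
            exact ⟨z, this ▸ hz1, hz2⟩
        obtain ⟨z, hz1, hz2⟩ := hJconv i j₁ j₃ j₂ (hmemJ j₁ h1) (hmemJ j₃ h3) h12 h23
        exact Or.inr ⟨i, hi, z, hz1, hz2⟩
      · have h1' : (x : V) ∈ X j₁ := by
          rcases h1 with ⟨h', -⟩ | ⟨i, hi, -⟩
          · exact h'
          · exact absurd ⟨i, hi⟩ hxv
        have h3' : (x : V) ∈ X j₃ := by
          rcases h3 with ⟨h', -⟩ | ⟨i, hi, -⟩
          · exact h'
          · exact absurd ⟨i, hi⟩ hxv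
        exact Or.inl ⟨hInt _ j₁ j₂ j₃ h12 h23 h1' h3', x.2⟩
    · -- comp_in_bag
      intro v hv
      have hvnot : ∀ j, v ∉ bags j := by
        intro j hj
        exact hv (Set.mem_iUnion.mpr ⟨j, hj⟩)
      obtain ⟨hvH, hvv⟩ := hnotY v hvnot
      obtain ⟨jc, hjc⟩ := hComp (v : V) (hPA v.2) hvH
      refine ⟨jc, ?_⟩
      intro w y hreach hadj hy
      obtain ⟨p, hp⟩ := hreach
      have hRw : Aux.Reach s' X (v : V) (w : V) := CONV v w p hp
      have hAA : s'.A.Adj (w : V) (y : V) := hA.2 hadj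
      by_cases hyH : ∃ j, (y : V) ∈ X j
      · exact Or.inl ⟨hjc _ _ hRw hAA hyH, y.2⟩
      · obtain ⟨jy, hjy⟩ := Set.mem_iUnion.mp hy
        obtain ⟨i, hyi⟩ : ∃ i, (y : V) = vv i := by
          rcases hjy with ⟨h'', -⟩ | ⟨i, hi, -⟩
          · exact absurd ⟨jy, h''⟩ hyH
          · exact ⟨i, hi⟩
        have hwnot : ¬∃ j, (w : V) ∈ X j :=
          (hnotY w (by simpa [Set.mem_iUnion] using hp w p.end_mem_support)).1
        obtain ⟨z, hz1, hz2⟩ := KEYJ i (v : V) jc hjc (hyi ▸ hyH)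
          (hyi ▸ (hRw.tail ⟨hAA, hwnot, hyH⟩))
        exact Or.inr ⟨i, hyi, z, hz1, hz2⟩
  · -- bag sizes
    intro j
    have himg : Subtype.val '' bags j = Y j := by
      ext x
      simp only [Set.mem_image]
      constructor
      · rintro ⟨y, hy, rfl⟩; exact hy
      · intro hx; exact ⟨⟨x, hYP j hx⟩, hx, rfl⟩
    have h1 : (bags j).ncard = (Y j).ncard := by
      rw [← himg, Set.ncard_image_of_injective _ Subtype.val_injective]
    have h2 : (Y j).ncard ≤ (X j).ncard := by
      set f : V → V := fun x =>
        if hx : x ∈ X j then x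
        else if h : ∃ i, x = vv i ∧ ∃ z ∈ (Ri i).support, z ∈ X j
          then h.choose_spec.2.choose else x with hf
      refine Set.ncard_le_ncard_of_injOn f ?_ ?_ (Set.toFinite _)
      · intro x hx
        by_cases hxX : x ∈ X j
        · simp [hf, hxX]
        · have h : ∃ i, x = vv i ∧ ∃ z ∈ (Ri i).support, z ∈ X j := by
            rcases hx with ⟨h', -⟩ | h'
            · exact absurd h' hxX
            · exact h'
          simp only [hf, hxX, dif_neg, not_false_iff, h, dif_pos]
          exact h.choose_spec.2.choose_spec.2
      · intro x₁ hx₁ x₂ hx₂ hfeq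
        have key : ∀ x ∈ Y j, x ∉ X j →
            ∃ i, x = vv i ∧ f x ∈ (Ri i).support ∧ f x ∈ X j := by
          intro x hx hxX
          have h : ∃ i, x = vv i ∧ ∃ z ∈ (Ri i).support, z ∈ X j := by
            rcases hx with ⟨h', -⟩ | h'
            · exact absurd h' hxX
            · exact h'
          refine ⟨h.choose, h.choose_spec.1, ?_, ?_⟩
          · simp only [hf, hxX, dif_neg, not_false_iff, h, dif_pos]
            exact h.choose_spec.2.choose_spec.1
          · simp only [hf, hxX, dif_neg, not_false_iff, h, dif_pos]
            exact h.choose_spec.2.choose_spec.2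
        by_cases h1X : x₁ ∈ X j <;> by_cases h2X : x₂ ∈ X j
        · simpa [hf, h1X, h2X] using hfeq
        · obtain ⟨i, he, hm1, -⟩ := key x₂ hx₂ h2X
          have hfx1 : f x₁ = x₁ := by simp [hf, h1X]
          have hx1mem : x₁ ∈ (Ri i).support := by rw [← hfx1, hfeq]; exact hm1
          exact (F1 i x₁ hx1mem (hYP j hx₁)).trans he.symm
        · obtain ⟨i, he, hm1, -⟩ := key x₁ hx₁ h1X
          have hfx2 : f x₂ = x₂ := by simp [hf, h2X]
          have hx2mem : x₂ ∈ (Ri i).support := by rw [← hfx2, ← hfeq]; exact hm1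
          exact (he.trans (F1 i x₂ hx2mem (hYP j hx₂)).symm)
        · obtain ⟨i₁, he₁, hm₁, -⟩ := key x₁ hx₁ h1X
          obtain ⟨i₂, he₂, hm₂, -⟩ := key x₂ hx₂ h2X
          by_cases hii : i₁ = i₂
          · rw [he₁, he₂, hii]
          · exfalso
            exact D.disjoint i₁ i₂ hii (f x₁) (hRisub i₁ hm₁)
              (hfeq ▸ hRisub i₂ hm₂)
    have h3 : (X j).ncard = (d.bag j).ncard :=
      Set.ncard_image_of_injective _ Subtype.val_injective
    calc (bags j).ncard = (Y j).ncard := h1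
      _ ≤ (X j).ncard := h2
      _ = (d.bag j).ncard := h3
      _ ≤ 2 * w - 1 := hbag j
  · -- last bag
    intro x hx
    obtain ⟨i, hi⟩ := hsurj (x : V) x.2 hx
    exact Or.inr ⟨i, hi.symm, hJmb i⟩
end

section
/- Let ℓ ≥ 2 and r ≥ 0 be integers, let k ≥ ℓr/2 be an integer, and let X be the graph obtained from the path on ℓ vertices by adding a universal vertex (a fan on ℓ+1 vertices). Then the complete rooted ternary tree T of vertex-height k+1 satisfies pw(T) ≥ k and td(T) ≥ k+1; moreover, when ℓ < 4, T is X-minor-free and has radius at least r. Consequently for ℓ ∈ {2,3} there is an X-minor-free graph G of radius at least r with pw(G) ≥ ⌊ℓ/2⌋(r − ⌊ℓ/2⌋). -/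
open SimpleGraph

/-- The complete rooted ternary tree of vertex-height `k+1`: vertices are sequences
over `Fin 3` of length at most `k`, and each vertex `a` is adjacent to its three
children `i :: a`. -/
def ternaryTree (k : ℕ) : SimpleGraph {l : List (Fin 3) // l.length ≤ k} :=
  SimpleGraph.fromRel (fun a b => ∃ i : Fin 3, b.val = i :: a.val)



namespace TLB
open SimpleGraph List

abbrev Vt (k : ℕ) := {l : List (Fin 3) // l.length ≤ k}

instance (k : ℕ) : Finite (Vt k) := (List.finite_length_le (Fin 3) k).to_subtype

variable {k : ℕ}

lemma adj_iff {a b : Vt k} :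
    (ternaryTree k).Adj a b ↔ ∃ i : Fin 3, a.val = i :: b.val ∨ b.val = i :: a.val := by
  constructor
  · intro h
    rw [ternaryTree, SimpleGraph.fromRel_adj] at h
    rcases h.2 with ⟨i, hi⟩ | ⟨i, hi⟩
    · exact ⟨i, Or.inr hi⟩
    · exact ⟨i, Or.inl hi⟩
  · rintro ⟨i, h | h⟩ <;> rw [ternaryTree, SimpleGraph.fromRel_adj]
    · refine ⟨fun hab => ?_, Or.inr ⟨i, h⟩⟩
      rw [hab] at h
      have := congrArg List.length h
      simp at this
    · refine ⟨fun hab => ?_, Or.inl ⟨i, h⟩⟩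
      rw [hab] at h
      have := congrArg List.length h
      simp at this

lemma adj_cons {a b : Vt k} (i : Fin 3) (h : b.val = i :: a.val) :
    (ternaryTree k).Adj a b := adj_iff.mpr ⟨i, Or.inr h⟩

lemma exists_walk_down : ∀ (l : List (Fin 3)) (h : l.length ≤ k) (a : List (Fin 3))
    (ha : a.length ≤ k), a <:+ l →
    ∃ p : (ternaryTree k).Walk ⟨l, h⟩ ⟨a, ha⟩,
      ∀ x ∈ p.support, a <:+ x.val ∧ x.val <:+ l := by
  intro l
  induction l with
  | nil =>
    intro h a ha hs
    have ha' : a = [] := List.suffix_nil.mp hs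
    subst ha'
    exact ⟨Walk.nil, by simp⟩
  | cons i l' IH =>
    intro h a ha hs
    rcases List.suffix_cons_iff.mp hs with heq | hs'
    · refine ⟨Walk.nil.copy rfl (Subtype.ext heq.symm), ?_⟩
      intro x hx
      rw [Walk.support_copy, Walk.support_nil] at hx
      simp at hx
      subst hx
      exact ⟨hs, List.suffix_refl _⟩
    · have hl' : l'.length ≤ k := Nat.le_of_succ_le h
      obtain ⟨p, hp⟩ := IH hl' a ha hs'
      refine ⟨Walk.cons ((adj_cons (a := ⟨l', hl'⟩) (b := ⟨i :: l', h⟩) i rfl).symm) p, ?_⟩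
      intro x hx
      rw [Walk.support_cons] at hx
      rcases List.mem_cons.mp hx with hx | hx
      · subst hx
        exact ⟨hs, List.suffix_refl _⟩
      · exact ⟨(hp x hx).1, (hp x hx).2.trans (List.suffix_cons i l')⟩

/-- The subtree rooted at `a`. -/
def St (a : Vt k) : Set (Vt k) := {x | a.val <:+ x.val}

lemma mem_St {a x : Vt k} : x ∈ St a ↔ a.val <:+ x.val := Iff.rfl

lemma linked_around (a : Vt k) (C : Set (Vt k)) (hup : ∀ u ∈ C, a.val <:+ u.val)
    (hclosed : ∀ u ∈ C, ∀ x : Vt k, a.val <:+ x.val → x.val <:+ u.val → x ∈ C) :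
    ∀ u ∈ C, ∀ v ∈ C, ∃ p : (ternaryTree k).Walk u v, ∀ x ∈ p.support, x ∈ C := by
  intro u hu v hv
  obtain ⟨p1, hp1⟩ := exists_walk_down u.val u.2 a.val a.2 (hup u hu)
  obtain ⟨p2, hp2⟩ := exists_walk_down v.val v.2 a.val a.2 (hup v hv)
  refine ⟨p1.append p2.reverse, ?_⟩
  intro x hx
  rcases (Walk.mem_support_append_iff _ _).mp hx with hx | hx
  · exact hclosed u hu x (hp1 x hx).1 (hp1 x hx).2
  · rw [Walk.support_reverse] at hx
    rw [List.mem_reverse] at hx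
    exact hclosed v hv x (hp2 x hx).1 (hp2 x hx).2

lemma St_linked (a : Vt k) :
    ∀ u ∈ St a, ∀ v ∈ St a, ∃ p : (ternaryTree k).Walk u v, ∀ x ∈ p.support, x ∈ St a :=
  linked_around a (St a) (fun _ hu => hu) (fun _ _ x hx _ => hx)

lemma St_diff_linked (a : Vt k) (b : List (Fin 3)) :
    ∀ u ∈ {x : Vt k | a.val <:+ x.val ∧ ¬ b <:+ x.val},
    ∀ v ∈ {x : Vt k | a.val <:+ x.val ∧ ¬ b <:+ x.val},
    ∃ p : (ternaryTree k).Walk u v,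
      ∀ x ∈ p.support, x ∈ {x : Vt k | a.val <:+ x.val ∧ ¬ b <:+ x.val} :=
  linked_around a _ (fun _ hu => hu.1)
    (fun u hu x hax hxu => ⟨hax, fun hbx => hu.2 (hbx.trans hxu)⟩)

end TLB

namespace TLB
open SimpleGraph List

variable {k : ℕ}

lemma exists_min {α : Type} (r : α → α → Prop) (htrans : ∀ a b c, r a b → r b c → r a c)
    (hanti : ∀ a b, r a b → r b a → a = b) (s : Finset α) (hs : s.Nonempty) :
    ∃ a ∈ s, ∀ b ∈ s, r b a → b = a := by
  classical
  induction s using Finset.induction_on with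
  | empty => simp at hs
  | @insert a t ha IH =>
    by_cases ht : t.Nonempty
    · obtain ⟨m, hm, hmin⟩ := IH ht
      by_cases hram : r a m
      · refine ⟨a, Finset.mem_insert_self a t, ?_⟩
        intro b hb hba
        rcases Finset.mem_insert.mp hb with rfl | hb
        · rfl
        · have hbm : b = m := hmin b hb (htrans b a m hba hram)
          subst hbm
          exact (hanti a b hram hba).symm
      · refine ⟨m, Finset.mem_insert_of_mem hm, ?_⟩
        intro b hb hbm
        rcases Finset.mem_insert.mp hb with rfl | hb
        · exact absurd hbm hram
        · exact hmin b hb hbm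
    · rw [Finset.not_nonempty_iff_eq_empty] at ht
      subst ht
      refine ⟨a, Finset.mem_insert_self a _, ?_⟩
      intro b hb _
      simpa using hb

lemma exists_root (r : Vt k → Vt k → Prop) (hrefl : ∀ v, r v v)
    (htrans : ∀ a b c, r a b → r b c → r a c)
    (hanti : ∀ a b, r a b → r b a → a = b)
    (hchain : ∀ u₁ u₂ v, r u₁ v → r u₂ v → r u₁ u₂ ∨ r u₂ u₁)
    (hedge : ∀ u v, (ternaryTree k).Adj u v → r u v ∨ r v u)
    (C : Set (Vt k)) (hne : C.Nonempty)
    (hlink : ∀ u ∈ C, ∀ v ∈ C, ∃ p : (ternaryTree k).Walk u v, ∀ x ∈ p.support, x ∈ C) :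
    ∃ v₀ ∈ C, ∀ u ∈ C, r v₀ u := by
  classical
  have hfin : C.Finite := Set.toFinite C
  obtain ⟨v₀, hv₀', hmin'⟩ := exists_min r htrans hanti hfin.toFinset
    (hfin.toFinset_nonempty.mpr hne)
  have hv₀ : v₀ ∈ C := hfin.mem_toFinset.mp hv₀'
  have hmin : ∀ b ∈ C, r b v₀ → b = v₀ := fun b hb => hmin' b (hfin.mem_toFinset.mpr hb)
  have aux : ∀ {x y : Vt k} (p : (ternaryTree k).Walk x y),
      (∀ z ∈ p.support, z ∈ C) → r v₀ x → r v₀ y := by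
    intro x y p
    induction p with
    | nil => exact fun _ h => h
    | cons hadj q IH =>
      rename_i x w y
      intro hsup hx
      have hwC : w ∈ C := hsup w (by rw [Walk.support_cons]; exact List.mem_cons_of_mem _ q.start_mem_support)
      have hrw : r v₀ w := by
        rcases hedge x w hadj with h | h
        · exact htrans _ _ _ hx h
        · rcases hchain v₀ w x hx h with h' | h'
          · exact h'
          · rw [hmin w hwC h']
            exact hrefl v₀
      exact IH (fun z hz => hsup z (by rw [Walk.support_cons]; exact List.mem_cons_of_mem _ hz)) hrw
  refine ⟨v₀, hv₀, fun u hu => ?_⟩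
  obtain ⟨p, hp⟩ := hlink v₀ hv₀ u hu
  exact aux p hp (hrefl v₀)

lemma suffix_anti {l₁ l₂ : List (Fin 3)} (h1 : l₁ <:+ l₂) (h2 : l₂ <:+ l₁) : l₁ = l₂ :=
  h1.eq_of_length (Nat.le_antisymm h1.length_le h2.length_le)

lemma suffix_same_length {l s t : List (Fin 3)} (hs : s <:+ l) (ht : t <:+ l)
    (hlen : s.length = t.length) : s = t := by
  rcases List.suffix_or_suffix_of_suffix hs ht with h | h
  · exact h.eq_of_length hlen
  · exact (h.eq_of_length hlen.symm).symm

/-- The suffix-order root of a connected set. -/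
lemma exists_suffix_root (C : Set (Vt k)) (hne : C.Nonempty)
    (hlink : ∀ u ∈ C, ∀ v ∈ C, ∃ p : (ternaryTree k).Walk u v, ∀ x ∈ p.support, x ∈ C) :
    ∃ v₀ ∈ C, ∀ u ∈ C, v₀.val <:+ u.val := by
  apply exists_root (fun x y => x.val <:+ y.val) (fun v => List.suffix_refl _)
    (fun _ _ _ h1 h2 => h1.trans h2)
    (fun _ _ h1 h2 => Subtype.ext (suffix_anti h1 h2))
    (fun _ _ _ h1 h2 => List.suffix_or_suffix_of_suffix h1 h2)
    ?_ C hne hlink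
  intro u v h
  rcases adj_iff.mp h with ⟨i, h | h⟩
  · exact Or.inr (show v.val <:+ u.val by rw [h]; exact List.suffix_cons i _)
  · exact Or.inl (show u.val <:+ v.val by rw [h]; exact List.suffix_cons i _)

lemma mem_support_of_crossing {m : Vt k} : ∀ {x y : Vt k} (p : (ternaryTree k).Walk x y),
    m.val <:+ x.val → ¬ m.val <:+ y.val → m ∈ p.support := by
  intro x y p
  induction p with
  | nil => exact fun h1 h2 => absurd h1 h2
  | cons hadj q IH =>
    rename_i x w y
    intro h1 h2
    by_cases hw : m.val <:+ w.val
    · rw [Walk.support_cons]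
      exact List.mem_cons_of_mem _ (IH hw h2)
    · rcases adj_iff.mp hadj with ⟨i, hxw | hwx⟩
      · have h1' : m.val <:+ i :: w.val := by rw [← hxw]; exact h1
        rcases List.suffix_cons_iff.mp h1' with heq | hc
        · have : m = x := Subtype.ext (heq.trans hxw.symm)
          rw [this]
          exact Walk.start_mem_support _
        · exact absurd hc hw
      · exfalso
        apply hw
        rw [hwx]
        exact h1.trans (List.suffix_cons i x.val)

end TLB

namespace TLB
open SimpleGraph List

variable {k : ℕ}

def LinkedSet (C : Set (Vt k)) : Prop :=
  ∀ u ∈ C, ∀ v ∈ C, ∃ p : (ternaryTree k).Walk u v, ∀ x ∈ p.support, x ∈ C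

lemma root_cons {Bi Bj : Set (Vt k)} (hdisj : ∀ x, x ∈ Bi → x ∉ Bj)
    (hlink : LinkedSet Bj) {rj : Vt k} (hrj : rj ∈ Bj) (hroot : ∀ x ∈ Bj, rj.val <:+ x.val)
    {u v : Vt k} (hu : u ∈ Bi) (hv : v ∈ Bj) {t : Fin 3} (hcons : v.val = t :: u.val) :
    rj.val = t :: u.val := by
  have h1 : rj.val <:+ t :: u.val := by rw [← hcons]; exact hroot v hv
  rcases List.suffix_cons_iff.mp h1 with heq | hsuf
  · exact heq
  · exfalso
    obtain ⟨p, hp⟩ := hlink v hv rj hrj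
    have hnot : ¬ u.val <:+ rj.val := by
      intro hur
      have : u = rj := Subtype.ext (suffix_anti hur hsuf)
      exact hdisj u hu (this ▸ hrj)
    have hmem : u ∈ p.support :=
      mem_support_of_crossing p (by rw [hcons]; exact List.suffix_cons t u.val) hnot
    exact hdisj u hu (hp u hmem)

lemma no_triangle (B : Fin 3 → Set (Vt k))
    (hdisj : ∀ i j, i ≠ j → ∀ x, x ∈ B i → x ∉ B j)
    (hlink : ∀ i, LinkedSet (B i)) (hne : ∀ i, (B i).Nonempty)
    (hadj : ∀ i j, i ≠ j → ∃ u ∈ B i, ∃ v ∈ B j, (ternaryTree k).Adj u v) : False := by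
  classical
  have hroots : ∀ i, ∃ v₀ ∈ B i, ∀ u ∈ B i, v₀.val <:+ u.val := fun i =>
    exists_suffix_root (B i) (hne i) (hlink i)
  choose rt hrt hrtroot using hroots
  set O : Fin 3 → Fin 3 → Prop := fun i j => ∃ u ∈ B i, ∃ t : Fin 3, (rt j).val = t :: u.val
    with hO
  have hOr : ∀ i j, i ≠ j → O i j ∨ O j i := by
    intro i j hij
    obtain ⟨u, hu, v, hv, huv⟩ := hadj i j hij
    rcases adj_iff.mp huv with ⟨t, hc | hc⟩
    · -- u.val = t :: v.val, child is u ∈ B i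
      right
      exact ⟨v, hv, t, root_cons (hdisj j i (Ne.symm hij)) (hlink i) (hrt i) (hrtroot i)
        hv hu hc⟩
    · -- v.val = t :: u.val, child is v ∈ B j
      left
      exact ⟨u, hu, t, root_cons (hdisj i j hij) (hlink j) (hrt j) (hrtroot j) hu hv hc⟩
  have hlen : ∀ i j, O i j → (rt i).val.length < (rt j).val.length := by
    rintro i j ⟨u, hu, t, ht⟩
    have h1 : (rt i).val.length ≤ u.val.length := (hrtroot i u hu).length_le
    have h2 : (rt j).val.length = u.val.length + 1 := by rw [ht]; simp
    omega
  have hdup : ∀ i i' j, i ≠ i' → O i j → O i' j → False := by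
    rintro i i' j hii' ⟨u, hu, t, ht⟩ ⟨u', hu', t', ht'⟩
    rw [ht] at ht'
    have : u.val = u'.val := (List.cons.injEq .. ▸ ht').2
    exact hdisj i i' hii' u hu (Subtype.ext this ▸ hu')
  have h01 := hOr 0 1 (by decide)
  have h02 := hOr 0 2 (by decide)
  have h12 := hOr 1 2 (by decide)
  rcases h01 with h01 | h01 <;> rcases h02 with h02 | h02 <;> rcases h12 with h12 | h12
  · exact hdup 0 1 2 (by decide) h02 h12
  · exact hdup 0 2 1 (by decide) h01 h12
  · -- O 0 1, O 2 0, O 1 2 : cycle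
    have := hlen 0 1 h01; have := hlen 2 0 h02; have := hlen 1 2 h12; omega
  · exact hdup 0 2 1 (by decide) h01 h12
  · exact hdup 0 1 2 (by decide) h02 h12
  · -- O 1 0, O 0 2, O 2 1 : cycle
    have := hlen 1 0 h01; have := hlen 0 2 h02; have := hlen 2 1 h12; omega
  · exact hdup 1 2 0 (by decide) h01 h02
  · exact hdup 1 2 0 (by decide) h01 h02

end TLB

namespace TLB
open SimpleGraph List

variable {k : ℕ}

lemma fan_adj_path {ℓ : ℕ} (hℓ : 2 ≤ ℓ) :
    (fanGraph ℓ).Adj (Sum.inl ⟨0, by omega⟩) (Sum.inl ⟨1, by omega⟩) := by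
  rw [fanGraph, addUniversal, SimpleGraph.fromRel_adj]
  constructor
  · simp [Fin.ext_iff]
  · exact Or.inl (Or.inl ⟨⟨0, by omega⟩, ⟨1, by omega⟩, rfl, rfl,
      SimpleGraph.pathGraph_adj.mpr (Or.inl rfl)⟩)

lemma fan_adj_univ {ℓ : ℕ} (x : Fin ℓ) :
    (fanGraph ℓ).Adj (Sum.inl x) (Sum.inr ()) := by
  rw [fanGraph, addUniversal, SimpleGraph.fromRel_adj]
  exact ⟨by simp, Or.inl (Or.inr ⟨x, rfl, rfl⟩)⟩

lemma linked_of_induce_connected {V : Type} {G : SimpleGraph V} {s : Set V}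
    (h : (G.induce s).Connected) :
    ∀ u ∈ s, ∀ v ∈ s, ∃ p : G.Walk u v, ∀ x ∈ p.support, x ∈ s := by
  intro u hu v hv
  obtain ⟨q⟩ := h.preconnected ⟨u, hu⟩ ⟨v, hv⟩
  refine ⟨q.map (SimpleGraph.Embedding.induce s).toHom, ?_⟩
  intro x hx
  replace hx : x ∈ (q.map (SimpleGraph.Embedding.induce s).toHom).support := hx
  rw [Walk.support_map] at hx
  obtain ⟨z, _, hz⟩ := List.mem_map.mp hx
  rw [← hz]
  exact z.2

lemma minorFree_fan {W : Type} (G' : SimpleGraph W) (f : W → Vt k)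
    (hinj : Function.Injective f)
    (hadjf : ∀ u v, G'.Adj u v → (ternaryTree k).Adj (f u) (f v))
    {ℓ : ℕ} (hℓ : 2 ≤ ℓ) : MinorFree G' (fanGraph ℓ) := by
  rintro ⟨Bm, hB⟩
  have hvv : ∃ vv : Fin 3 → (Fin ℓ ⊕ Unit), Function.Injective vv ∧
      ∀ i j : Fin 3, i ≠ j → (fanGraph ℓ).Adj (vv i) (vv j) := by
    refine ⟨![Sum.inl ⟨0, by omega⟩, Sum.inl ⟨1, by omega⟩, Sum.inr ()], ?_, ?_⟩
    · intro a b hab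
      fin_cases a <;> fin_cases b <;> simp_all [Fin.ext_iff]
    · intro i j hij
      fin_cases i <;> fin_cases j <;> simp_all <;>
      first
        | exact fan_adj_path hℓ
        | exact (fan_adj_path hℓ).symm
        | exact fan_adj_univ _
        | exact (fan_adj_univ _).symm
  obtain ⟨vv, hvvinj, hfanadj⟩ := hvv
  apply no_triangle (fun i => f '' Bm (vv i))
  · -- disjoint
    intro i j hij x hxi hxj
    obtain ⟨y, hy, hyx⟩ := hxi
    obtain ⟨z, hz, hzx⟩ := hxj
    have : y = z := hinj (hyx.trans hzx.symm)
    subst this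
    exact Set.disjoint_left.mp (hB.pairwise_disjoint (vv i) (vv j) (fun h => hij (hvvinj h))) hy hz
  · -- linked
    intro i u hu v hv
    obtain ⟨y, hy, rfl⟩ := hu
    obtain ⟨z, hz, rfl⟩ := hv
    obtain ⟨p, hp⟩ := linked_of_induce_connected (hB.connected (vv i)) y hy z hz
    refine ⟨p.map ⟨f, fun h => hadjf _ _ h⟩, ?_⟩
    intro x hx
    rw [Walk.support_map] at hx
    obtain ⟨z', hz', rfl⟩ := List.mem_map.mp hx
    exact ⟨z', hp z' hz', rfl⟩
  · -- nonempty
    intro i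
    exact (hB.nonempty (vv i)).image f
  · -- edges
    intro i j hij
    obtain ⟨u, hu, v, hv, huv⟩ := hB.adj (vv i) (vv j) (hfanadj i j hij)
    exact ⟨f u, ⟨u, hu, rfl⟩, f v, ⟨v, hv, rfl⟩, hadjf u v huv⟩

end TLB

namespace TLB
open SimpleGraph List

variable {k : ℕ}

lemma pd_cross {V : Type} {G : SimpleGraph V} {m : ℕ} (d : PathDecompS G Set.univ m) :
    ∀ {u v : V} (p : G.Walk u v) {a b j : Fin m}, u ∈ d.bag a → v ∈ d.bag b →
      a ≤ j → j ≤ b → ∃ x ∈ p.support, x ∈ d.bag j := by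
  have cover : ∀ x : V, x ∈ ⋃ i, d.bag i := fun x => d.S_subset (Set.mem_univ x)
  intro u v p
  induction p with
  | nil =>
    rename_i z
    intro a b j ha hb haj hjb
    exact ⟨z, Walk.start_mem_support _, d.interval z a j b haj hjb ha hb⟩
  | cons hadj q IH =>
    rename_i u w v
    intro a b j ha hb haj hjb
    obtain ⟨c, hc1, hc2⟩ := d.edge_in_bag u w (cover u) (cover w) hadj
    rcases le_total j c with hjc | hcj
    · exact ⟨u, Walk.start_mem_support _, d.interval u a j c haj hjc ha hc1⟩
    · obtain ⟨x, hx, hxj⟩ := IH hc2 hb hcj hjb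
      exact ⟨x, by rw [Walk.support_cons]; exact List.mem_cons_of_mem _ hx, hxj⟩

lemma sort3 {m : ℕ} (n : Fin 3 → Fin m) :
    ∃ σ : Fin 3 → Fin 3, Function.Injective σ ∧ n (σ 0) ≤ n (σ 1) ∧ n (σ 1) ≤ n (σ 2) := by
  rcases le_total (n 0) (n 1) with h01 | h01 <;>
    rcases le_total (n 1) (n 2) with h12 | h12 <;>
    rcases le_total (n 0) (n 2) with h02 | h02
  · exact ⟨![0, 1, 2], by decide, by simpa, by simpa⟩
  · exact ⟨![0, 1, 2], by decide, by simpa, by simpa⟩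
  · exact ⟨![0, 2, 1], by decide, by simpa, by simpa⟩
  · exact ⟨![2, 0, 1], by decide, by simpa, by simpa⟩
  · exact ⟨![1, 0, 2], by decide, by simpa, by simpa⟩
  · exact ⟨![1, 2, 0], by decide, by simpa, by simpa⟩
  · exact ⟨![1, 0, 2], by decide, by simpa, by simpa⟩
  · exact ⟨![2, 1, 0], by decide, by simpa, by simpa⟩

lemma bag_lower : ∀ h : ℕ, h ≤ k → ∀ (m : ℕ) (d : PathDecompS (ternaryTree k) Set.univ m)
    (a : Vt k), a.val.length = k - h →
    ∃ j, h + 1 ≤ (d.bag j ∩ St a).ncard := by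
  intro h
  induction h with
  | zero =>
    intro _ m d a _
    obtain ⟨j, hj⟩ := Set.mem_iUnion.mp (d.S_subset (Set.mem_univ a))
    refine ⟨j, ?_⟩
    have : (0:ℕ) < (d.bag j ∩ St a).ncard :=
      (Set.ncard_pos (Set.toFinite _)).mpr ⟨a, hj, List.suffix_refl _⟩
    omega
  | succ h IH =>
    intro hk1 m d a ha
    have hk' : h ≤ k := Nat.le_of_succ_le hk1
    have hchlen : ∀ t : Fin 3, (t :: a.val).length ≤ k := by
      intro t; simp [ha]; omega
    set child : Fin 3 → Vt k := fun t => ⟨t :: a.val, hchlen t⟩ with hchild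
    have hch : ∀ t, (child t).val.length = k - h := by
      intro t; simp [hchild, ha]; omega
    have hIH := fun t => IH hk' m d (child t) (hch t)
    choose n hn using hIH
    obtain ⟨σ, hσinj, hσ01, hσ12⟩ := sort3 n
    have hσ01' : σ 0 ≠ σ 1 := fun h => by have := hσinj h; simp at this
    have hσ21' : σ 2 ≠ σ 1 := fun h => by have := hσinj h; simp at this
    -- pick u ∈ bag (n (σ 0)) ∩ subtree of child (σ 0), w for σ 2
    have hneu : (d.bag (n (σ 0)) ∩ St (child (σ 0))).Nonempty :=
      Set.nonempty_of_ncard_ne_zero (by have := hn (σ 0); omega)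
    have hnew : (d.bag (n (σ 2)) ∩ St (child (σ 2))).Nonempty :=
      Set.nonempty_of_ncard_ne_zero (by have := hn (σ 2); omega)
    obtain ⟨u, hu1, hu2⟩ := hneu
    obtain ⟨w, hw1, hw2⟩ := hnew
    set C : Set (Vt k) := {x | a.val <:+ x.val ∧ ¬ ((σ 1 : Fin 3) :: a.val) <:+ x.val}
      with hC
    have hmemC : ∀ (t : Fin 3), t ≠ σ 1 → ∀ x : Vt k, (t :: a.val) <:+ x.val → x ∈ C := by
      intro t ht x hx
      refine ⟨(List.suffix_cons t a.val).trans hx, fun hx' => ?_⟩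
      have := suffix_same_length hx' hx (by simp)
      simp at this
      exact ht this.symm
    have huC : u ∈ C := hmemC (σ 0) hσ01' u hu2
    have hwC : w ∈ C := hmemC (σ 2) hσ21' w hw2
    obtain ⟨p, hp⟩ := St_diff_linked a ((σ 1 : Fin 3) :: a.val) u huC w hwC
    obtain ⟨x, hxsup, hxbag⟩ := pd_cross d p hu1 hw1 hσ01 hσ12
    have hxC : x ∈ C := hp x hxsup
    refine ⟨n (σ 1), ?_⟩
    have hxnot : x ∉ d.bag (n (σ 1)) ∩ St (child (σ 1)) := fun hmem => hxC.2 hmem.2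
    have hsub : insert x (d.bag (n (σ 1)) ∩ St (child (σ 1))) ⊆ d.bag (n (σ 1)) ∩ St a := by
      intro y hy
      rcases Set.mem_insert_iff.mp hy with rfl | hy
      · exact ⟨hxbag, hxC.1⟩
      · exact ⟨hy.1, (List.suffix_cons (σ 1) a.val).trans hy.2⟩
    have h1 : (insert x (d.bag (n (σ 1)) ∩ St (child (σ 1)))).ncard
        = (d.bag (n (σ 1)) ∩ St (child (σ 1))).ncard + 1 :=
      Set.ncard_insert_of_notMem hxnot (Set.toFinite _)
    have h2 := Set.ncard_le_ncard hsub (Set.toFinite _)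
    have h3 := hn (σ 1)
    omega

lemma bigbag {m : ℕ} (d : PathDecompS (ternaryTree k) Set.univ m) :
    ∃ j, k + 1 ≤ (d.bag j).ncard := by
  obtain ⟨j, hj⟩ := bag_lower k (le_refl k) m d ⟨[], by simp⟩ (by simp)
  refine ⟨j, le_trans hj (Set.ncard_le_ncard (Set.inter_subset_left) (Set.toFinite _))⟩

lemma pw_ge {V : Type} (G : SimpleGraph V) (k : ℕ)
    (hbig : ∀ (m : ℕ) (d : PathDecompS G Set.univ m), ∃ j, k + 1 ≤ (d.bag j).ncard) :
    k ≤ pwS G Set.univ := by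
  apply le_csInf
  · refine ⟨(Set.univ : Set V).ncard, 1,
      ⟨fun _ => Set.univ, by rw [Set.iUnion_const], fun u v _ _ _ => ⟨0, trivial, trivial⟩,
        fun _ _ _ _ _ _ _ _ => trivial,
        fun v hv => absurd (Set.mem_iUnion.mpr ⟨0, Set.mem_univ v⟩) hv⟩,
      fun i => Nat.le_succ _⟩
  · rintro b ⟨m, d, hwid⟩
    obtain ⟨j, hj⟩ := hbig m d
    have := hwid j
    omega

end TLB

namespace TLB
open SimpleGraph List

variable {k : ℕ}

lemma elim_chain (F : ElimForestS (ternaryTree k) Set.univ) :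
    ∀ h : ℕ, h ≤ k → ∀ a : Vt k, a.val.length = k - h →
      ∃ c : Finset (Vt k), (∀ x ∈ c, a.val <:+ x.val) ∧
        (∀ x ∈ c, ∀ y ∈ c, F.anc x y ∨ F.anc y x) ∧ c.card = h + 1 := by
  classical
  have hW : ∀ x : Vt k, x ∈ F.W := fun x => F.S_subset (Set.mem_univ x)
  have hrefl : ∀ v : Vt k, F.anc v v := fun v => F.anc_refl v (hW v)
  intro h
  induction h with
  | zero =>
    intro _ a _
    refine ⟨{a}, ?_, ?_, Finset.card_singleton a⟩
    · intro x hx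
      rw [Finset.mem_singleton] at hx
      subst hx
      exact List.suffix_refl _
    · intro x hx y hy
      rw [Finset.mem_singleton] at hx hy
      subst hx; subst hy
      exact Or.inl (hrefl _)
  | succ h IH =>
    intro hk1 a ha
    have hk' : h ≤ k := Nat.le_of_succ_le hk1
    -- root of the subtree at a
    obtain ⟨v₀, hv₀, hroot⟩ := exists_root F.anc hrefl F.anc_trans F.anc_antisymm
      F.ancestors_chain (fun u v hadj => F.edges_comparable u v (hW u) (hW v) hadj)
      (St a) ⟨a, List.suffix_refl _⟩ (St_linked a)
    obtain ⟨t, ht⟩ : ∃ t : Fin 3, ¬ (t :: a.val) <:+ v₀.val := by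
      by_cases h0 : ((0 : Fin 3) :: a.val) <:+ v₀.val
      · by_cases h1 : ((1 : Fin 3) :: a.val) <:+ v₀.val
        · exfalso
          have := suffix_same_length h0 h1 (by simp)
          simp at this
        · exact ⟨1, h1⟩
      · exact ⟨0, h0⟩
    have hchlen : (t :: a.val).length ≤ k := by simp [ha]; omega
    have hchval : ((⟨t :: a.val, hchlen⟩ : Vt k)).val.length = k - h := by simp [ha]; omega
    obtain ⟨c', hsub', hchain', hcard'⟩ := IH hk' ⟨t :: a.val, hchlen⟩ hchval
    have hv₀notin : v₀ ∉ c' := fun hmem => ht (hsub' v₀ hmem)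
    have hancv₀ : ∀ y ∈ c', F.anc v₀ y := by
      intro y hy
      exact hroot y ((List.suffix_cons t a.val).trans (hsub' y hy))
    refine ⟨insert v₀ c', ?_, ?_, ?_⟩
    · intro x hx
      rcases Finset.mem_insert.mp hx with rfl | hx
      · exact hv₀
      · exact (List.suffix_cons t a.val).trans (hsub' x hx)
    · intro x hx y hy
      rcases Finset.mem_insert.mp hx with hx' | hx'
      · subst hx'
        rcases Finset.mem_insert.mp hy with hy' | hy'
        · subst hy'; exact Or.inl (hrefl _)
        · exact Or.inl (hancv₀ y hy')
      · rcases Finset.mem_insert.mp hy with hy' | hy'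
        · subst hy'; exact Or.inr (hancv₀ x hx')
        · exact hchain' x hx' y hy'
    · rw [Finset.card_insert_of_notMem hv₀notin, hcard']

lemma td_ge : k + 1 ≤ tdS (ternaryTree k) Set.univ := by
  classical
  letI : Fintype (Vt k) := Fintype.ofFinite (Vt k)
  apply le_csInf
  · -- a linear-order elimination forest
    refine ⟨Fintype.card (Vt k),
      ⟨Set.univ, le_refl _, fun u v => (Fintype.equivFin (Vt k)) u ≤ (Fintype.equivFin (Vt k)) v,
        fun u v _ => ⟨Set.mem_univ u, Set.mem_univ v⟩,
        fun v _ => le_refl _,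
        fun u v h1 h2 => (Fintype.equivFin (Vt k)).injective (le_antisymm h1 h2),
        fun u v w h1 h2 => le_trans h1 h2,
        fun u₁ u₂ v _ _ => le_total _ _,
        fun u v _ _ _ => le_total _ _,
        fun v hv => absurd (Set.mem_univ v) hv⟩,
      fun c _ => Finset.card_le_univ c⟩
  · rintro b ⟨F, hF⟩
    obtain ⟨c, _, hchain, hcard⟩ := elim_chain F k (le_refl k) ⟨[], by simp⟩ (by simp)
    have := hF c hchain
    omega

end TLB

namespace TLB
open SimpleGraph List

variable {k : ℕ}

/-- Number of trailing `j`s. -/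
def tC (j : Fin 3) (l : List (Fin 3)) : ℕ :=
  (l.reverse.takeWhile (fun c => decide (c = j))).length

lemma tC_le (j : Fin 3) (l : List (Fin 3)) : tC j l ≤ l.length := by
  have := (List.takeWhile_sublist (fun c => decide (c = j)) (l := l.reverse)).length_le
  simpa [tC] using this

lemma tC_cons (j i : Fin 3) (l : List (Fin 3)) :
    tC j (i :: l) = tC j l ∨ tC j (i :: l) = tC j l + 1 := by
  unfold tC
  rw [List.reverse_cons, List.takeWhile_append]
  by_cases hfull : ((l.reverse.takeWhile (fun c => decide (c = j)))).length = l.reverse.length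
  · rw [if_pos hfull, List.length_append, hfull]
    by_cases hij : i = j
    · right; simp [List.takeWhile, hij]
    · left; simp [List.takeWhile, hij]
  · rw [if_neg hfull]; left; rfl

lemma tC_replicate (j : Fin 3) (m : ℕ) : tC j (List.replicate m j) = m := by
  unfold tC
  rw [List.reverse_replicate, List.takeWhile_eq_self_iff.mpr ?_, List.length_replicate]
  intro x hx
  rw [List.eq_of_mem_replicate hx]
  simp

/-- The distance potential. -/
def phi (j : Fin 3) (k : ℕ) (x : Vt k) : ℤ :=
  (x.val.length : ℤ) + k - 2 * tC j x.val

lemma phi_edge (j : Fin 3) {u v : Vt k} (h : (ternaryTree k).Adj u v) :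
    phi j k u ≤ phi j k v + 1 := by
  rcases adj_iff.mp h with ⟨i, hc | hc⟩
  · rcases tC_cons j i v.val with h' | h' <;>
      · simp only [phi, hc, List.length_cons, h']
        push_cast
        omega
  · rcases tC_cons j i u.val with h' | h' <;>
      · simp only [phi, hc, List.length_cons, h']
        push_cast
        omega

lemma walk_phi (j : Fin 3) : ∀ {u v : Vt k} (p : (ternaryTree k).Walk u v),
    phi j k u ≤ phi j k v + p.length := by
  intro u v p
  induction p with
  | nil => simp
  | cons hadj q IH =>
    have h1 := phi_edge j hadj
    rw [Walk.length_cons]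
    push_cast
    omega

lemma exists_far {r : ℕ} (hrk : r ≤ k) (u : Vt k) :
    ∃ v : Vt k, (ternaryTree k).Reachable u v ∧
      ∀ p : (ternaryTree k).Walk u v, r ≤ p.length := by
  obtain ⟨j, hj⟩ : ∃ j : Fin 3, tC j u.val = 0 := by
    cases hrev : u.val.reverse with
    | nil => exact ⟨0, by unfold tC; rw [hrev]; simp⟩
    | cons c rest =>
      refine ⟨if c = 0 then 1 else 0, ?_⟩
      unfold tC
      rw [hrev, List.takeWhile_cons]
      have hne : ¬ (c = if c = 0 then 1 else 0) := by
        split <;> simp_all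
      simp [hne]
  refine ⟨⟨List.replicate k j, by simp⟩, ?_, ?_⟩
  · -- reachable via root
    have hv : (List.replicate k j).length ≤ k := by simp
    have hnil : ([] : List (Fin 3)).length ≤ k := by simp
    obtain ⟨p1, _⟩ := exists_walk_down u.val u.2 [] hnil List.nil_suffix
    obtain ⟨p2, _⟩ := exists_walk_down (List.replicate k j) hv [] hnil List.nil_suffix
    have r1 : (ternaryTree k).Reachable u ⟨[], hnil⟩ := ⟨p1⟩
    have r2 : (ternaryTree k).Reachable (⟨List.replicate k j, hv⟩ : Vt k) ⟨[], hnil⟩ := ⟨p2⟩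
    exact r1.trans r2.symm
  · intro p
    have h1 := walk_phi j p
    have h2 : phi j k u = (u.val.length : ℤ) + k := by simp [phi, hj]
    have h3 : phi j k (⟨List.replicate k j, by simp⟩ : Vt k) = 0 := by
      simp [phi, tC_replicate]
      ring
    rw [h2, h3] at h1
    have : (r : ℤ) ≤ p.length := by
      have hrk' : (r : ℤ) ≤ k := by exact_mod_cast hrk
      have hlen : (0 : ℤ) ≤ u.val.length := by positivity
      omega
    exact_mod_cast this

end TLB
namespace TLB

lemma ncard_preimage_equiv {α β : Type} (e : α ≃ β) (s : Set β) :
    (⇑e ⁻¹' s).ncard = s.ncard := by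
  have h : ⇑e ⁻¹' s = ⇑e.symm '' s := by
    rw [Equiv.image_eq_preimage_symm e.symm s, Equiv.symm_symm]
  rw [h, Set.ncard_image_of_injective s e.symm.injective]

end TLB


/-- lower bound construction.  With `X` the fan obtained from the path
on `ℓ` vertices by adding a universal vertex, the complete ternary tree `T` of
vertex-height `k+1` (where `k ≥ ℓr/2`) has `pw(T) ≥ k` and `td(T) ≥ k+1`; for
`ℓ < 4` it is `X`-minor-free of radius at least `r`; consequently for `ℓ ∈ {2,3}`
there is an `X`-minor-free graph of radius at least `r` and pathwidth at least
`⌊ℓ/2⌋(r - ⌊ℓ/2⌋)`. -/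
theorem ternary_lower_bound (ℓ r k : ℕ) (hℓ : 2 ≤ ℓ) (hk : ℓ * r ≤ 2 * k) :
    (k ≤ pwS (ternaryTree k) Set.univ) ∧
    (k + 1 ≤ tdS (ternaryTree k) Set.univ) ∧
    (ℓ < 4 →
      MinorFree (ternaryTree k) (fanGraph ℓ) ∧
      ∀ u, ∃ v, r ≤ (ternaryTree k).dist u v) ∧
    ((ℓ = 2 ∨ ℓ = 3) →
      ∃ (n : ℕ) (G : SimpleGraph (Fin n)),
        MinorFree G (fanGraph ℓ) ∧
        (∀ u, ∃ v, r ≤ G.dist u v) ∧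
        (ℓ / 2) * (r - ℓ / 2) ≤ pwS G Set.univ) := by
  classical
  have hrk : r ≤ k := by
    have h2 : 2 * r ≤ ℓ * r := Nat.mul_le_mul_right r hℓ
    have := le_trans h2 hk
    omega
  have hdist : ∀ u : TLB.Vt k, ∃ v, r ≤ (ternaryTree k).dist u v := by
    intro u
    obtain ⟨v, hreach, hlen⟩ := TLB.exists_far hrk u
    obtain ⟨p, hp⟩ := hreach.exists_walk_length_eq_dist
    exact ⟨v, hp ▸ hlen p⟩
  refine ⟨TLB.pw_ge (ternaryTree k) k (fun m d => TLB.bigbag d), TLB.td_ge,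
    fun _ => ⟨TLB.minorFree_fan (ternaryTree k) id Function.injective_id
      (fun _ _ h => h) hℓ, hdist⟩, ?_⟩
  intro hl24
  obtain ⟨n, ⟨e⟩⟩ := Finite.exists_equiv_fin (TLB.Vt k)
  refine ⟨n, (ternaryTree k).comap ⇑e.symm, ?_, ?_, ?_⟩
  · exact TLB.minorFree_fan _ e.symm e.symm.injective (fun _ _ h => h) hℓ
  · intro u'
    obtain ⟨v, hreach, hlen⟩ := TLB.exists_far hrk (e.symm u')
    refine ⟨e v, ?_⟩
    let fwd : (ternaryTree k).comap ⇑e.symm →g ternaryTree k := ⟨⇑e.symm, fun h => h⟩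
    let bwd : ternaryTree k →g (ternaryTree k).comap ⇑e.symm :=
      ⟨⇑e, fun {x y} h => by
        show (ternaryTree k).Adj (e.symm (e x)) (e.symm (e y))
        simpa using h⟩
    have hreach' : ((ternaryTree k).comap ⇑e.symm).Reachable u' (e v) := by
      have h2 := hreach.map bwd
      have h3 : bwd (e.symm u') = u' := e.apply_symm_apply u'
      have h4 : bwd v = e v := rfl
      rwa [h3, h4] at h2
    obtain ⟨p, hp⟩ := hreach'.exists_walk_length_eq_dist
    rw [← hp]
    have hcp : fwd (e v) = v := e.symm_apply_apply v
    have := hlen ((p.map fwd).copy rfl hcp)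
    simpa using this
  · have cover : ∀ m (d' : PathDecompS ((ternaryTree k).comap ⇑e.symm) Set.univ m)
        (x : Fin n), x ∈ ⋃ i, d'.bag i := fun m d' x => d'.S_subset (Set.mem_univ x)
    refine le_trans ?_ (TLB.pw_ge _ k ?_)
    · rcases hl24 with rfl | rfl <;> norm_num <;> omega
    · intro m d'
      let dd : PathDecompS (ternaryTree k) Set.univ m :=
        { bag := fun i => ⇑e ⁻¹' d'.bag i
          S_subset := by
            intro x _
            obtain ⟨i, hi⟩ := Set.mem_iUnion.mp (cover m d' (e x))
            exact Set.mem_iUnion.mpr ⟨i, hi⟩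
          edge_in_bag := by
            intro u v _ _ hadj
            have hadj' : ((ternaryTree k).comap ⇑e.symm).Adj (e u) (e v) := by
              show (ternaryTree k).Adj (e.symm (e u)) (e.symm (e v))
              simpa using hadj
            obtain ⟨i, h1, h2⟩ := d'.edge_in_bag (e u) (e v) (cover m d' _) (cover m d' _) hadj'
            exact ⟨i, h1, h2⟩
          interval := fun v i j l hij hjl hi hl => d'.interval (e v) i j l hij hjl hi hl
          comp_in_bag := by
            intro v hv
            exfalso
            apply hv
            obtain ⟨i, hi⟩ := Set.mem_iUnion.mp (cover m d' (e v))
            exact Set.mem_iUnion.mpr ⟨i, hi⟩ }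
      obtain ⟨j, hj⟩ := TLB.bigbag dd
      refine ⟨j, ?_⟩
      have hb : dd.bag j = ⇑e ⁻¹' d'.bag j := rfl
      rw [hb, TLB.ncard_preimage_equiv] at hj
      exact hj
end
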